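/- arXiv:2010.16094 — 10 statements merged into one kernel-verified Lean document; each statement's English description precedes it below -/
import Mathlib

section
/- Let m ≥ 1, d ≥ 1 and let Q be a d×d complex generalized permutation matrix of order m (each row and each column of Q contains exactly one nonzero entry, and every nonzero entry is an m-th root of unity). Then for every 1 ≤ j ≤ d and all j-combinations σ, τ, ν of {0,…,d−1}: det((Q^†)_{τ,σ}) · det(Q_{σ,ν}) = |det(Q_{σ,τ})| if τ = ν, and det((Q^†)_{τ,σ}) · det(Q_{σ,ν}) = 0 if τ ≠ ν, where Q^† denotes the conjugate transpose of Q. -/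
open Classical Matrix

/-- A `d × d` complex generalized permutation matrix of order `m`: each row and each
column contains exactly one nonzero entry, and every nonzero entry is an `m`-th root
of unity. -/
def IsGenPermMatrix (m d : ℕ) (Q : Matrix (Fin d) (Fin d) ℂ) : Prop :=
  (∀ i, ∃! j, Q i j ≠ 0) ∧ (∀ j, ∃! i, Q i j ≠ 0) ∧
  ∀ i j, Q i j ≠ 0 → Q i j ^ m = 1

/-!
A square submatrix `A = Q_{σ,τ}` of a generalized permutation matrix has at most one nonzero
entry in each column, so at most one term of the Leibniz expansion of `det A` survives and
`|det A| ∈ {0, 1}`; with `(Q^†)_{τ,σ} = A^†` this gives `conj (det A) * det A = |det A|^2 = |det A|`.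
If both `det Q_{σ,τ}` and `det Q_{σ,ν}` are nonzero, then no row or column of these submatrices
vanishes, so `range τ` and `range ν` are both the set of columns in which the rows `σ` of `Q`
have their nonzero entries; two increasing tuples with the same range coincide.
-/

namespace Matrix

theorem norm_det_eq_zero_or_one {n R : Type*} [Fintype n] [DecidableEq n] [NormedField R]
    (A : Matrix n n R) (hcol : ∀ i i' k, A i k ≠ 0 → A i' k ≠ 0 → i = i')
    (hnorm : ∀ i k, A i k ≠ 0 → ‖A i k‖ = 1) :
    ‖A.det‖ = 0 ∨ ‖A.det‖ = 1 := by
  rw [det_apply]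
  by_cases hzero : ∀ π : Equiv.Perm n, ∏ i, A (π i) i = 0
  · left
    simp [hzero]
  push Not at hzero
  obtain ⟨π, hπ⟩ := hzero
  have hπ_entry : ∀ i, A (π i) i ≠ 0 := fun i => Finset.prod_ne_zero_iff.mp hπ i (by simp)
  have hothers : ∀ π' ≠ π, ∏ i, A (π' i) i = 0 := by
    intro π' hne
    by_contra h
    exact hne (Equiv.ext fun i =>
      hcol _ _ i (Finset.prod_ne_zero_iff.mp h i (by simp)) (hπ_entry i))
  right
  rw [Finset.sum_eq_single π (fun π' _ hne => by rw [hothers π' hne, smul_zero])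
    (by simp)]
  have hprod : ‖∏ i, A (π i) i‖ = 1 := by
    rw [norm_prod]
    exact Finset.prod_eq_one fun i _ => hnorm _ _ (hπ_entry i)
  rcases Int.units_eq_one_or (Equiv.Perm.sign π) with h | h <;> simp [h, hprod]

theorem range_eq_setOf_ne_zero_of_det_submatrix_ne_zero {ι κ o R : Type*} [Fintype o]
    [DecidableEq o] [CommRing R] {Q : Matrix ι κ R} {σ : o → ι} {τ : o → κ}
    (hrow : ∀ i k k', Q i k ≠ 0 → Q i k' ≠ 0 → k = k') (hdet : (Q.submatrix σ τ).det ≠ 0) :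
    Set.range τ = {k | ∃ a, Q (σ a) k ≠ 0} := by
  ext k
  constructor
  · rintro ⟨b, rfl⟩
    by_contra hcol
    simp only [Set.mem_ofPred_eq, not_exists, not_not] at hcol
    exact hdet (det_eq_zero_of_column_eq_zero b fun a => hcol a)
  · rintro ⟨a, ha⟩
    by_contra hk
    refine hdet (det_eq_zero_of_row_eq_zero a fun b => ?_)
    by_contra hb
    exact hk ⟨b, (hrow _ _ _ ha hb).symm⟩

end Matrix

namespace IsGenPermMatrix

variable {m d : ℕ} {Q : Matrix (Fin d) (Fin d) ℂ}

theorem norm_det_submatrix_eq_zero_or_one (hm : m ≠ 0) (hQ : IsGenPermMatrix m d Q)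
    {j : ℕ} {σ : Fin j → Fin d} (hσ : Function.Injective σ) (τ : Fin j → Fin d) :
    ‖(Q.submatrix σ τ).det‖ = 0 ∨ ‖(Q.submatrix σ τ).det‖ = 1 :=
  norm_det_eq_zero_or_one _ (fun _ _ _ ha ha' => hσ ((hQ.2.1 _).unique ha ha'))
    fun _ _ h => Complex.norm_eq_one_of_pow_eq_one (hQ.2.2 _ _ h) hm

end IsGenPermMatrix

theorem subdeterminant_conjTranspose_mul_general
    (m d j : ℕ) (hm : 1 ≤ m)
    (Q : Matrix (Fin d) (Fin d) ℂ) (hQ : IsGenPermMatrix m d Q)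
    (σ τ ν : Fin j → Fin d)
    (hσ : StrictMono σ) (hτ : StrictMono τ) (hν : StrictMono ν) :
    (Q.conjTranspose.submatrix τ σ).det * (Q.submatrix σ ν).det =
      if τ = ν then (‖(Q.submatrix σ τ).det‖ : ℂ) else 0 := by
  rw [← conjTranspose_submatrix, det_conjTranspose]
  split_ifs with hτν
  · subst hτν
    rw [Complex.star_def, Complex.conj_mul']
    rcases hQ.norm_det_submatrix_eq_zero_or_one (by omega) hσ.injective τ with h | h <;>
      simp [h]
  · by_contra hne
    obtain ⟨hτdet, hνdet⟩ := mul_ne_zero_iff.mp hne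
    have hrow : ∀ i k k', Q i k ≠ 0 → Q i k' ≠ 0 → k = k' := fun i _ _ => (hQ.1 i).unique
    refine hτν ((hτ.range_inj hν).mp ?_)
    rw [range_eq_setOf_ne_zero_of_det_submatrix_ne_zero hrow (star_ne_zero.mp hτdet),
      range_eq_setOf_ne_zero_of_det_submatrix_ne_zero hrow hνdet]

/-- For a generalized permutation matrix `Q` and `j`-combinations `σ, τ, ν`
(strictly increasing tuples),
`det ((Q^†)_{τ,σ}) * det (Q_{σ,ν}) = |det (Q_{σ,τ})|` if `τ = ν`, and `= 0` otherwise. -/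
theorem subdeterminant_conjTranspose_mul
    (m d j : ℕ) (hm : 1 ≤ m) (hd : 1 ≤ d) (hj : 1 ≤ j) (hjd : j ≤ d)
    (Q : Matrix (Fin d) (Fin d) ℂ) (hQ : IsGenPermMatrix m d Q)
    (σ τ ν : Fin j → Fin d)
    (hσ : StrictMono σ) (hτ : StrictMono τ) (hν : StrictMono ν) :
    (Q.conjTranspose.submatrix τ σ).det * (Q.submatrix σ ν).det =
      if τ = ν then (‖(Q.submatrix σ τ).det‖ : ℂ) else 0 :=
  subdeterminant_conjTranspose_mul_general m d j hm Q hQ σ τ ν hσ hτ hν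
end

section
/- Let n ≥ 1 and 1 ≤ k ≤ n, and let G be a subgroup of Sym⁺(2,2n) (the group of 2n×2n signed permutation matrices with determinant 1) such that the only linear subspaces W of ℝ^{binom(2n,2k)} satisfying φ_{2k}(Q)·W ⊆ W for all Q ∈ G are W = {0} and W = ℝ^{binom(2n,2k)}. Then for every 2k-combination τ of {0,…,2n−1} and every set D of 2k-combinations of {0,…,2n−1} with |D| = binom(n,k), one has (1/|G|) · Σ_{Q∈G} Σ_{σ∈D} det(Q_{σ,τ})² = binom(n,k) / binom(2n,2k). -/
/-!
For `Q ∈ G` the compound matrices `φ(Q)` are orthogonal (Cauchy–Binet makes `φ` multiplicative,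
and signed permutation matrices are orthogonal), so the sum `B = ∑_{Q ∈ G} φ(Q) E_{ττ} φ(Q)ᵀ` is
symmetric and, `G` being closed under multiplication, commutes with every `φ(Q)`. An eigenspace of
`B` is then `φ(G)`-invariant, hence everything by irreducibility: `B = c • 1`, and taking traces
gives `c = |G| / C(2n,2k)`. The diagonal entry of `B` at `σ` is `∑_Q det (Q_{σ,τ})²`, and summing
over the `C(n,k)` elements of `D` gives the claim.
-/

open Classical

def IsSignedPerm {d : ℕ} (Q : Matrix (Fin d) (Fin d) ℝ) : Prop :=
  (∀ i j, Q i j = 0 ∨ Q i j = 1 ∨ Q i j = -1) ∧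
  (∀ i, ∃! j, Q i j ≠ 0) ∧ (∀ j, ∃! i, Q i j ≠ 0)

/-- The `j`-th compound matrix of `Q`, with rows and columns indexed by `j`-combinations
(strictly increasing tuples), whose `(σ,τ)` entry is `det (Q_{σ,τ})`. -/
noncomputable def compound {d : ℕ} (j : ℕ) (Q : Matrix (Fin d) (Fin d) ℝ) :
    Matrix {f : Fin j → Fin d // StrictMono f} {f : Fin j → Fin d // StrictMono f} ℝ :=
  Matrix.of fun σ τ => (Q.submatrix σ.1 τ.1).det

open Matrix

section CauchyBinet

variable {R : Type*} [CommRing R]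

theorem Matrix.det_mul_eq_sum_prod_mul_det_submatrix {m n : Type*} [Fintype m] [DecidableEq m]
    [Fintype n] (A : Matrix m n R) (B : Matrix n m R) :
    (A * B).det = ∑ r : m → n, (∏ i, A i (r i)) * (B.submatrix r id).det := by
  have hrows : (A * B).det = detRowAlternating (fun i => ∑ l, A i l • B l) := by
    congr 1
    ext i x
    simp [Matrix.mul_apply]
  rw [hrows, ← AlternatingMap.coe_multilinearMap, MultilinearMap.map_sum]
  refine Finset.sum_congr rfl fun r _ => ?_
  rw [MultilinearMap.map_smul_univ, smul_eq_mul]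
  rfl

theorem bijective_strictMono_comp_perm {j : ℕ} {α : Type*} [LinearOrder α] :
    Function.Bijective fun p : {f : Fin j → α // StrictMono f} × Equiv.Perm (Fin j) =>
      (⟨p.1.1 ∘ p.2, p.1.2.injective.comp p.2.injective⟩ :
        {r : Fin j → α // Function.Injective r}) := by
  constructor
  · rintro ⟨μ, π⟩ ⟨ν, ρ⟩ h
    have hcomp : μ.1 ∘ π = ν.1 ∘ ρ := congrArg Subtype.val h
    have hμν : μ = ν := by
      refine Subtype.ext ((μ.2.range_inj ν.2).mp ?_)
      rw [← π.surjective.range_comp μ.1, hcomp, ρ.surjective.range_comp]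
    subst hμν
    exact Prod.ext rfl (Equiv.ext fun i => μ.2.injective (congrFun hcomp i))
  · rintro ⟨r, hr⟩
    classical
    set s := Finset.univ.image r
    have hs : s.card = j := by simp [s, Finset.card_image_of_injective _ hr]
    have hrange : Set.range r = Set.range (s.orderEmbOfFin hs) := by
      simp [Finset.range_orderEmbOfFin, s]
    let π : Equiv.Perm (Fin j) := (Equiv.ofInjective r hr).trans
      ((Equiv.setCongr hrange).trans (Equiv.ofInjective _ (s.orderEmbOfFin hs).injective).symm)
    refine ⟨(⟨s.orderEmbOfFin hs, (s.orderEmbOfFin hs).strictMono⟩, π), Subtype.ext ?_⟩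
    funext i
    simp [π, Equiv.apply_ofInjective_symm]

theorem Matrix.det_submatrix_comp_perm {m n : Type*} [Fintype m] [DecidableEq m]
    (B : Matrix n m R) (r : m → n) (π : Equiv.Perm m) :
    (B.submatrix (r ∘ π) id).det = Equiv.Perm.sign π * (B.submatrix r id).det := by
  rw [show B.submatrix (r ∘ π) id = (B.submatrix r id).submatrix π id from rfl, det_permute]

theorem Matrix.det_mul_eq_sum_strictMono {j d : ℕ} (A : Matrix (Fin j) (Fin d) R)
    (B : Matrix (Fin d) (Fin j) R) :
    (A * B).det = ∑ μ : {f : Fin j → Fin d // StrictMono f},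
      (A.submatrix id μ.1).det * (B.submatrix μ.1 id).det := by
  classical
  set F : (Fin j → Fin d) → R := fun r => (∏ i, A i (r i)) * (B.submatrix r id).det
  have hF : ∀ r, F r ≠ 0 → Function.Injective r := by
    intro r hr
    by_contra hinj
    obtain ⟨a, b, hab, hne⟩ := Function.not_injective_iff.mp hinj
    exact hr (mul_eq_zero_of_right _ (det_zero_of_row_eq hne (by ext; simp [hab])))
  have hminor : ∀ μ : {f : Fin j → Fin d // StrictMono f}, (A.submatrix id μ.1).det =
      ∑ π : Equiv.Perm (Fin j), Equiv.Perm.sign π * ∏ i, A i (μ.1 (π i)) := by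
    intro μ
    rw [← det_transpose, det_apply']
    rfl
  calc (A * B).det = ∑ r, F r := det_mul_eq_sum_prod_mul_det_submatrix A B
    _ = ∑ r : {r : Fin j → Fin d // Function.Injective r}, F r := by
      rw [← Finset.sum_filter_of_ne fun r _ => hF r,
        Finset.sum_subtype _ fun r => Finset.mem_filter_univ r]
    _ = ∑ p : {f : Fin j → Fin d // StrictMono f} × Equiv.Perm (Fin j), F (p.1.1 ∘ p.2) :=
      (Fintype.sum_bijective _ bijective_strictMono_comp_perm _ _ fun _ => rfl).symm
    _ = _ := by
      rw [Fintype.sum_prod_type]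
      refine Finset.sum_congr rfl fun μ _ => ?_
      simp only [F, hminor, Finset.sum_mul, det_submatrix_comp_perm, Function.comp_apply]
      refine Finset.sum_congr rfl fun π _ => ?_
      ring

end CauchyBinet

theorem Fintype.card_strictMono_fin (j d : ℕ) :
    Fintype.card {f : Fin j → Fin d // StrictMono f} = d.choose j := by
  let e : {f : Fin j → Fin d // StrictMono f} ≃ (Fin j ↪o Fin d) :=
    { toFun := fun f => OrderEmbedding.ofStrictMono f.1 f.2
      invFun := fun f => ⟨f, f.strictMono⟩
      left_inv := fun _ => rfl
      right_inv := fun _ => rfl }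
  rw [← Nat.card_eq_fintype_card, Nat.card_congr (e.trans Set.powersetCard.ofFinEmbEquiv),
    Set.powersetCard.card, Nat.card_eq_fintype_card, Fintype.card_fin]

section Compound

variable {d : ℕ}

theorem compound_mul (j : ℕ) (Q R : Matrix (Fin d) (Fin d) ℝ) :
    compound j (Q * R) = compound j Q * compound j R := by
  ext σ τ
  rw [compound, of_apply, submatrix_mul _ _ _ id _ Function.bijective_id,
    det_mul_eq_sum_strictMono, mul_apply]
  rfl

theorem compound_transpose (j : ℕ) (Q : Matrix (Fin d) (Fin d) ℝ) :
    compound j Qᵀ = (compound j Q)ᵀ := by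
  ext σ τ
  simp [compound, ← transpose_submatrix, det_transpose]

theorem compound_one (j : ℕ) : compound j (1 : Matrix (Fin d) (Fin d) ℝ) = 1 := by
  ext σ τ
  rw [compound, of_apply]
  by_cases h : σ = τ
  · subst h
    rw [submatrix_one _ σ.2.injective, det_one, one_apply_eq]
  · rw [one_apply_ne h]
    have hsub : ¬ Set.range σ.1 ⊆ Set.range τ.1 := fun hsub =>
      h (Subtype.ext ((σ.2.range_inj τ.2).mp (Set.eq_of_subset_of_ncard_le hsub
        (by rw [Set.ncard_range_of_injective σ.2.injective,
          Set.ncard_range_of_injective τ.2.injective]))))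
    obtain ⟨_, ⟨i, rfl⟩, hi⟩ := Set.not_subset.mp hsub
    refine det_eq_zero_of_row_eq_zero i fun l => ?_
    simp only [submatrix_apply, one_apply]
    exact if_neg fun he => hi ⟨l, he.symm⟩

theorem compound_transpose_mul_self {Q : Matrix (Fin d) (Fin d) ℝ} (hQ : Qᵀ * Q = 1) (j : ℕ) :
    (compound j Q)ᵀ * compound j Q = 1 := by
  rw [← compound_transpose, ← compound_mul, hQ, compound_one]

noncomputable def compoundHom (j : ℕ) :
    Matrix (Fin d) (Fin d) ℝ →* Matrix {f : Fin j → Fin d // StrictMono f}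
      {f : Fin j → Fin d // StrictMono f} ℝ where
  toFun := compound j
  map_one' := compound_one j
  map_mul' := compound_mul j

end Compound

theorem IsSignedPerm.transpose_mul_self {d : ℕ} {Q : Matrix (Fin d) (Fin d) ℝ}
    (hQ : IsSignedPerm Q) : Qᵀ * Q = 1 := by
  obtain ⟨hval, hrow, hcol⟩ := hQ
  ext a b
  rw [mul_apply, one_apply]
  obtain ⟨i, hia, hi⟩ := hcol a
  rw [Finset.sum_eq_single i]
  · split_ifs with hab
    · subst hab
      rcases hval i a with h | h | h <;> simp_all
    · have hib : Q i b = 0 := by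
        by_contra hib
        exact hab ((hrow i).unique hia hib)
      simp [hib]
  · intro l _ hli
    have hla : Q l a = 0 := by
      by_contra hla
      exact hli (hi l hla)
    simp [hla]
  · simp

theorem Matrix.IsHermitian.exists_eq_smul_one_of_commute {ι X : Type*} [Fintype ι]
    [DecidableEq ι] (ρ : X → Matrix ι ι ℝ) (G : Set X)
    (hirr : ∀ W : Submodule ℝ (ι → ℝ), (∀ g ∈ G, ∀ w ∈ W, ρ g *ᵥ w ∈ W) → W = ⊥ ∨ W = ⊤)
    {B : Matrix ι ι ℝ} (hB : B.IsHermitian) (hcomm : ∀ g ∈ G, Commute (ρ g) B) :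
    ∃ c : ℝ, B = c • 1 := by
  rcases isEmpty_or_nonempty ι with _ | ⟨⟨i⟩⟩
  · exact ⟨0, Subsingleton.elim _ _⟩
  · set c := hB.eigenvalues i
    let W := Module.End.eigenspace (toLin' B) c
    have hW : ∀ g ∈ G, ∀ w ∈ W, ρ g *ᵥ w ∈ W := by
      intro g hg w hw
      rw [Module.End.mem_eigenspace_iff, toLin'_apply] at hw ⊢
      rw [mulVec_mulVec, ← (hcomm g hg).eq, ← mulVec_mulVec, hw, mulVec_smul]
    have hv : ⇑(hB.eigenvectorBasis i) ∈ W := by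
      rw [Module.End.mem_eigenspace_iff, toLin'_apply]
      exact hB.mulVec_eigenvectorBasis i
    have hv0 : ⇑(hB.eigenvectorBasis i) ≠ 0 := fun h =>
      hB.eigenvectorBasis.orthonormal.ne_zero i (by ext l; exact congrFun h l)
    have hWtop : W = ⊤ := (hirr W hW).resolve_left fun h => hv0 (by rwa [h] at hv)
    refine ⟨c, (toLin' (R := ℝ)).injective (LinearMap.ext fun w => ?_)⟩
    have hw : w ∈ W := hWtop ▸ Submodule.mem_top
    rw [Module.End.mem_eigenspace_iff] at hw
    rw [hw, map_smul, toLin'_one]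
    rfl

theorem Finset.sum_comp_mul_left_of_mul_mem {M β : Type*} [Monoid M] [AddCommMonoid β]
    {G : Finset M} (hG : ∀ g ∈ G, ∀ h ∈ G, g * h ∈ G) {g : M} (hg : g ∈ G)
    (hreg : IsLeftRegular g) (f : M → β) : ∑ h ∈ G, f (g * h) = ∑ h ∈ G, f h := by
  classical
  have himage : G.image (g * ·) = G :=
    Finset.eq_of_subset_of_card_le (Finset.image_subset_iff.mpr fun h hh => hG g hg h hh)
      (Finset.card_image_of_injective G hreg).ge
  conv_rhs => rw [← himage]
  exact (Finset.sum_image fun _ _ _ _ h => hreg h).symm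

section Twirl

variable {ι : Type*} [Fintype ι] [DecidableEq ι] {X : Type*} [Monoid X]
  (ρ : X →* Matrix ι ι ℝ) (G : Finset X)

def twirl (A : Matrix ι ι ℝ) : Matrix ι ι ℝ :=
  ∑ g ∈ G, ρ g * A * (ρ g)ᵀ

variable {ρ G}

theorem twirl_single_apply (j a b : ι) :
    twirl ρ G (single j j 1) a b = ∑ g ∈ G, ρ g a j * ρ g b j := by
  rw [twirl, Matrix.sum_apply]
  refine Finset.sum_congr rfl fun g _ => ?_
  rw [mul_apply, Finset.sum_eq_single j
    (fun l _ hl => by rw [mul_single_apply_of_ne _ _ _ _ _ hl, zero_mul]) (by simp),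
    mul_single_apply_same, mul_one, transpose_apply]

theorem isSymm_twirl {A : Matrix ι ι ℝ} (hA : A.IsSymm) : (twirl ρ G A).IsSymm := by
  simp only [IsSymm, twirl, transpose_sum, transpose_mul, hA.eq, transpose_transpose, mul_assoc]

theorem trace_twirl (horth : ∀ g ∈ G, (ρ g)ᵀ * ρ g = 1) (A : Matrix ι ι ℝ) :
    (twirl ρ G A).trace = G.card * A.trace := by
  rw [twirl, trace_sum, Finset.sum_congr rfl fun g hg => by
    rw [trace_mul_cycle, horth g hg, one_mul], Finset.sum_const, nsmul_eq_mul]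

theorem commute_twirl (hG : ∀ g ∈ G, ∀ h ∈ G, g * h ∈ G) (hreg : ∀ g ∈ G, IsLeftRegular g)
    (horth : ∀ g ∈ G, (ρ g)ᵀ * ρ g = 1) (A : Matrix ι ι ℝ) {g : X} (hg : g ∈ G) :
    Commute (ρ g) (twirl ρ G A) := by
  have hconj : ρ g * twirl ρ G A * (ρ g)ᵀ = twirl ρ G A := by
    simp only [twirl, Finset.mul_sum, Finset.sum_mul]
    refine Eq.trans (Finset.sum_congr rfl fun h _ => ?_)
      (Finset.sum_comp_mul_left_of_mul_mem hG hg (hreg g hg) fun h => ρ h * A * (ρ h)ᵀ)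
    simp only [map_mul, transpose_mul, mul_assoc]
  calc ρ g * twirl ρ G A = ρ g * twirl ρ G A * ((ρ g)ᵀ * ρ g) := by rw [horth g hg, mul_one]
    _ = twirl ρ G A * ρ g := by rw [← mul_assoc, hconj]

theorem twirl_eq_smul_one
    (hirr : ∀ W : Submodule ℝ (ι → ℝ), (∀ g ∈ G, ∀ w ∈ W, ρ g *ᵥ w ∈ W) → W = ⊥ ∨ W = ⊤)
    (hG : ∀ g ∈ G, ∀ h ∈ G, g * h ∈ G) (hreg : ∀ g ∈ G, IsLeftRegular g)
    (horth : ∀ g ∈ G, (ρ g)ᵀ * ρ g = 1) {A : Matrix ι ι ℝ} (hA : A.IsSymm) :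
    twirl ρ G A = (G.card * A.trace / Fintype.card ι) • 1 := by
  obtain ⟨c, hc⟩ := (isHermitian_iff_isSymm.mpr (isSymm_twirl hA)).exists_eq_smul_one_of_commute
    ρ G hirr fun g hg => commute_twirl hG hreg horth A hg
  rcases isEmpty_or_nonempty ι with _ | _
  · exact Subsingleton.elim _ _
  · have htrace := trace_twirl horth A
    rw [hc, trace_smul, trace_one, smul_eq_mul] at htrace
    have hcard : (Fintype.card ι : ℝ) ≠ 0 := Nat.cast_ne_zero.mpr Fintype.card_ne_zero
    rw [hc, ← htrace, mul_div_cancel_right₀ c hcard]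

end Twirl

theorem tight_frame_eigenvalue_general
    (n k : ℕ)
    (G : Finset (Matrix (Fin (2*n)) (Fin (2*n)) ℝ))
    (hG0 : G.Nonempty)
    (hG1 : ∀ Q ∈ G, IsSignedPerm Q ∧ Q.det = 1)
    (hG2 : ∀ Q ∈ G, ∀ R ∈ G, Q * R ∈ G)
    (hirr : ∀ W : Submodule ℝ ({f : Fin (2*k) → Fin (2*n) // StrictMono f} → ℝ),
      (∀ Q ∈ G, ∀ w ∈ W, (compound (2*k) Q).mulVec w ∈ W) → W = ⊥ ∨ W = ⊤)
    (τ : Fin (2*k) → Fin (2*n)) (hτ : StrictMono τ)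
    (D : Finset {f : Fin (2*k) → Fin (2*n) // StrictMono f})
    (hD : D.card = n.choose k) :
    (1 / (G.card : ℝ)) * ∑ Q ∈ G, ∑ σ ∈ D, ((Q.submatrix σ.1 τ).det) ^ 2 =
      (n.choose k : ℝ) / ((2*n).choose (2*k) : ℝ) := by
  set τ' : {f : Fin (2*k) → Fin (2*n) // StrictMono f} := ⟨τ, hτ⟩
  have horth : ∀ Q ∈ G, Qᵀ * Q = 1 := fun Q hQ => (hG1 Q hQ).1.transpose_mul_self
  have htwirl := twirl_eq_smul_one (ρ := compoundHom (2*k)) hirr hG2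
    (fun Q hQ => isLeftRegular_of_mul_eq_one (horth Q hQ))
    (fun Q hQ => compound_transpose_mul_self (horth Q hQ) _) (A := single τ' τ' 1)
    (by simp [IsSymm])
  have hdiag : ∀ σ ∈ D, ∑ Q ∈ G, (Q.submatrix σ.1 τ).det ^ 2 =
      G.card / (2*n).choose (2*k) := by
    intro σ _
    have := congrFun (congrFun htwirl σ) σ
    rw [twirl_single_apply, Fintype.card_strictMono_fin] at this
    simpa [sq, compoundHom, compound, τ'] using this
  have hGcard : (G.card : ℝ) ≠ 0 := by exact_mod_cast hG0.card_pos.ne'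
  rw [Finset.sum_comm, Finset.sum_congr rfl hdiag, Finset.sum_const, hD, nsmul_eq_mul]
  field_simp

/-- If `G` is a (finite, nonempty, multiplication-closed, i.e. sub-) group of `2n × 2n`
signed permutation matrices of determinant `1` such that the compound representation
`φ_{2k}` of `G` on `ℝ^{C(2n,2k)}` admits no nontrivial invariant subspace, then for every
`2k`-combination `τ` and every set `D` of `2k`-combinations with `|D| = C(n,k)`,
`(1/|G|) ∑_{Q ∈ G} ∑_{σ ∈ D} det (Q_{σ,τ})² = C(n,k) / C(2n,2k)`. -/
theorem tight_frame_eigenvalue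
    (n k : ℕ) (hn : 1 ≤ n) (hk : 1 ≤ k) (hkn : k ≤ n)
    (G : Finset (Matrix (Fin (2*n)) (Fin (2*n)) ℝ))
    (hG0 : G.Nonempty)
    (hG1 : ∀ Q ∈ G, IsSignedPerm Q ∧ Q.det = 1)
    (hG2 : ∀ Q ∈ G, ∀ R ∈ G, Q * R ∈ G)
    (hirr : ∀ W : Submodule ℝ ({f : Fin (2*k) → Fin (2*n) // StrictMono f} → ℝ),
      (∀ Q ∈ G, ∀ w ∈ W, (compound (2*k) Q).mulVec w ∈ W) → W = ⊥ ∨ W = ⊤)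
    (τ : Fin (2*k) → Fin (2*n)) (hτ : StrictMono τ)
    (D : Finset {f : Fin (2*k) → Fin (2*n) // StrictMono f})
    (hD : D.card = n.choose k) :
    (1 / (G.card : ℝ)) * ∑ Q ∈ G, ∑ σ ∈ D, ((Q.submatrix σ.1 τ).det) ^ 2 =
      (n.choose k : ℝ) / ((2*n).choose (2*k) : ℝ) :=
  tight_frame_eigenvalue_general n k G hG0 hG1 hG2 hirr τ hτ D hD
end

section
/- Let n ≥ 1 and let 1 ≤ k ≤ 2n with k ≠ n. Then the only linear subspaces W of ℝ^{binom(2n,k)} satisfying φ_k(Q)·W ⊆ W for all Q ∈ Sym⁺(2,2n) are W = {0} and W = ℝ^{binom(2n,k)}; that is, the compound-matrix representation φ_k of the group of 2n×2n signed permutation matrices with determinant 1 is irreducible. -/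
open Classical

/-!
The diagonal sign matrices `diag ε` with `∏ ε = 1` act on the basis vector `e_σ` of
`ℝ^{C(2n,k)}` by the character `∏_{i ∈ σ} ε i`. These characters separate the
`k`-combinations: for `σ ≠ τ`, flip the sign at one point of `σ Δ τ` and at one point outside
it; the latter exists because `k ≠ n` forbids `σ` to be the complement of `τ`. So a nonzero
invariant subspace, being a sum of joint eigenspaces, contains some `e_σ`. A signed permutation
matrix of determinant `1`, built from a permutation carrying `τ` onto `σ` and one compensating
sign, sends `e_σ` to a nonzero multiple of `e_τ`, so the subspace contains every basis vector.
-/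

open Matrix Equiv

lemma Finset.exists_sign_prod_ne {α : Type*} [Fintype α] [DecidableEq α] {S T : Finset α}
    (hST : S ≠ T) (hSTc : S ≠ Tᶜ) :
    ∃ ε : α → ℝ, (∀ i, ε i = 1 ∨ ε i = -1) ∧ ∏ i, ε i = 1 ∧ ∏ i ∈ S, ε i ≠ ∏ i ∈ T, ε i := by
  obtain ⟨a, ha⟩ : ∃ a, ¬(a ∈ S ↔ a ∈ T) := by
    by_contra! h
    exact hST (Finset.ext h)
  obtain ⟨b, hb⟩ : ∃ b, (b ∈ S ↔ b ∈ T) := by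
    by_contra! h
    exact hSTc (Finset.ext fun x => by have := h x; rw [Finset.mem_compl]; tauto)
  have hab : a ≠ b := by rintro rfl; exact ha hb
  refine ⟨Pi.mulSingle a (-1) * Pi.mulSingle b (-1), fun i => ?_, ?_, ?_⟩
  · by_cases hia : i = a <;> by_cases hib : i = b <;> simp_all
  · simp [Finset.prod_mul_distrib, Finset.prod_pi_mulSingle']
  · simp only [Pi.mul_apply, Finset.prod_mul_distrib, Finset.prod_pi_mulSingle']
    by_cases haS : a ∈ S <;> by_cases hbS : b ∈ S <;> simp_all <;> norm_num

abbrev Combination (d k : ℕ) := {f : Fin k → Fin d // StrictMono f}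

namespace Combination

variable {d k : ℕ}

def toFinset (σ : Combination d k) : Finset (Fin d) := Finset.univ.image σ.1

lemma mem_toFinset {σ : Combination d k} {x : Fin d} : x ∈ σ.toFinset ↔ ∃ j, σ.1 j = x := by
  simp [toFinset]

lemma card_toFinset (σ : Combination d k) : σ.toFinset.card = k := by
  simp [toFinset, Finset.card_image_of_injective _ σ.2.injective]

lemma toFinset_injective : Function.Injective (toFinset : Combination d k → Finset (Fin d)) := by
  intro σ τ h
  have hrange : Set.range σ.1 = Set.range τ.1 := by
    simpa [toFinset] using congrArg (fun s : Finset (Fin d) => (s : Set (Fin d))) h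
  exact Subtype.ext ((σ.2.range_inj τ.2).1 hrange)

lemma prod_toFinset {M : Type*} [CommMonoid M] (σ : Combination d k) (f : Fin d → M) :
    ∏ x ∈ σ.toFinset, f x = ∏ j, f (σ.1 j) :=
  Finset.prod_image fun _ _ _ _ h => σ.2.injective h

lemma exists_apply_notMem_toFinset {σ τ : Combination d k} (h : σ ≠ τ) :
    ∃ j, τ.1 j ∉ σ.toFinset := by
  by_contra! hsub
  refine h (toFinset_injective (Finset.eq_of_subset_of_card_le (fun x hx => ?_) ?_).symm)
  · obtain ⟨j, rfl⟩ := mem_toFinset.1 hx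
    exact hsub j
  · rw [card_toFinset, card_toFinset]

lemma exists_sign_prod_ne {σ τ : Combination d k} (h : σ ≠ τ) (hd : d ≠ 2 * k) :
    ∃ ε : Fin d → ℝ, (∀ i, ε i = 1 ∨ ε i = -1) ∧ ∏ i, ε i = 1 ∧
      ∏ j, ε (σ.1 j) ≠ ∏ j, ε (τ.1 j) := by
  have hcompl : σ.toFinset ≠ τ.toFinsetᶜ := fun hσ => by
    have := congrArg Finset.card hσ
    rw [Finset.card_compl, card_toFinset, card_toFinset, Fintype.card_fin] at this
    omega
  obtain ⟨ε, hε, hprod, hne⟩ := Finset.exists_sign_prod_ne (toFinset_injective.ne h) hcompl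
  exact ⟨ε, hε, hprod, by simpa only [prod_toFinset] using hne⟩

end Combination

section WeightSpaces

variable {ι K : Type*} [DecidableEq ι] [Field K] {W : Submodule K (ι → K)}
  {S : Set (ι → K)}

lemma Submodule.exists_mem_apply_ne_zero_forall_apply_eq_zero
    (hS : ∀ χ ∈ S, ∀ v ∈ W, χ * v ∈ W) (hsep : Pairwise fun σ τ => ∃ χ ∈ S, χ σ ≠ χ τ)
    {v : ι → K} (hv : v ∈ W) {σ : ι} (hvσ : v σ ≠ 0) (s : Finset ι) (hσs : σ ∉ s) :
    ∃ u ∈ W, u σ ≠ 0 ∧ ∀ τ ∈ s, u τ = 0 := by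
  induction s using Finset.induction_on with
  | empty => exact ⟨v, hv, hvσ, by simp⟩
  | insert τ₀ s _ ih =>
    obtain ⟨u, hu, huσ, hus⟩ := ih fun h => hσs (Finset.mem_insert_of_mem h)
    obtain ⟨χ, hχ, hne⟩ := hsep fun h : σ = τ₀ => hσs (h ▸ Finset.mem_insert_self _ _)
    refine ⟨χ * u - χ τ₀ • u, W.sub_mem (hS χ hχ u hu) (W.smul_mem _ hu), ?_, ?_⟩
    · simpa [← sub_mul, sub_ne_zero] using And.intro hne huσ
    · intro τ hτ
      rcases Finset.mem_insert.1 hτ with rfl | hτ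
      · simp
      · simp [hus τ hτ]

theorem Submodule.exists_single_mem_of_mul_mem [Fintype ι] (hS : ∀ χ ∈ S, ∀ v ∈ W, χ * v ∈ W)
    (hsep : Pairwise fun σ τ => ∃ χ ∈ S, χ σ ≠ χ τ) (hW : W ≠ ⊥) :
    ∃ σ, Pi.single σ 1 ∈ W := by
  obtain ⟨v, hv, hv0⟩ := W.ne_bot_iff.1 hW
  obtain ⟨σ, hσ⟩ := Function.ne_iff.1 hv0
  obtain ⟨u, hu, huσ, hu0⟩ :=
    exists_mem_apply_ne_zero_forall_apply_eq_zero hS hsep hv hσ (Finset.univ.erase σ) (by simp)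
  have hsingle : Pi.single σ 1 = (u σ)⁻¹ • u := by
    ext τ
    rcases eq_or_ne τ σ with rfl | h
    · simp [huσ]
    · simp [h, hu0 τ (by simp [h])]
  exact ⟨σ, hsingle ▸ W.smul_mem _ hu⟩

theorem Submodule.eq_top_of_forall_single_mem [Fintype ι] (hW : ∀ σ, Pi.single σ 1 ∈ W) : W = ⊤ := by
  rw [eq_top_iff, ← (Pi.basisFun K ι).span_eq, Submodule.span_le]
  rintro _ ⟨σ, rfl⟩
  simpa using hW σ

end WeightSpaces

section SignedPermutations

variable {d k : ℕ}

lemma compound_diagonal_submatrix_apply (c : Fin d → ℝ) {e : Perm (Fin d)}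
    {σ τ : Combination d k} (he : ∀ j, e (τ.1 j) = σ.1 j) (ρ : Combination d k) :
    compound k ((diagonal c).submatrix e id) ρ σ = if ρ = τ then ∏ j, c (σ.1 j) else 0 := by
  simp only [compound, of_apply, submatrix_submatrix, Function.id_comp]
  split_ifs with h
  · subst h
    rw [show e ∘ ρ.1 = σ.1 from funext he, submatrix_diagonal _ _ σ.2.injective, det_diagonal]
    rfl
  · obtain ⟨j, hj⟩ := Combination.exists_apply_notMem_toFinset h
    refine det_eq_zero_of_column_eq_zero j fun i => diagonal_apply_ne _ fun hij => hj ?_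
    exact Combination.mem_toFinset.2 ⟨i, e.injective (hij.trans (he j).symm)⟩

lemma compound_diagonal_mulVec (c : Fin d → ℝ) (v : Combination d k → ℝ) :
    compound k (diagonal c) *ᵥ v = (fun σ => ∏ j, c (σ.1 j)) * v := by
  have hdiag : compound k (diagonal c) = diagonal fun σ : Combination d k => ∏ j, c (σ.1 j) := by
    ext ρ σ
    have h := compound_diagonal_submatrix_apply c (e := 1) (τ := σ) (fun _ => rfl) ρ
    rcases eq_or_ne ρ σ with rfl | hρσ <;> simp_all
  ext σ
  rw [hdiag, mulVec_diagonal]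
  rfl

lemma compound_diagonal_submatrix_mulVec_single (c : Fin d → ℝ) {e : Perm (Fin d)}
    {σ τ : Combination d k} (he : ∀ j, e (τ.1 j) = σ.1 j) :
    compound k ((diagonal c).submatrix e id) *ᵥ Pi.single σ 1 =
      (∏ j, c (σ.1 j)) • Pi.single τ 1 := by
  ext ρ
  simp [compound_diagonal_submatrix_apply c he, Pi.single_apply]

lemma isSignedPerm_diagonal_submatrix {c : Fin d → ℝ} (hc : ∀ i, c i = 1 ∨ c i = -1)
    (e : Perm (Fin d)) : IsSignedPerm ((diagonal c).submatrix e id) := by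
  have hc0 : ∀ i, c i ≠ 0 := fun i => by rcases hc i with h | h <;> simp [h]
  refine ⟨fun i j => ?_, fun i => ⟨e i, by simp [hc0], fun j hj => ?_⟩,
    fun j => ⟨e.symm j, by simp [hc0], fun i hi => ?_⟩⟩
  · by_cases h : e i = j <;> simp [h, hc]
  · by_contra h
    exact hj (diagonal_apply_ne _ (Ne.symm h))
  · by_contra h
    exact hi (diagonal_apply_ne _ fun h' => h (e.eq_symm_apply.2 h'))

lemma exists_isSignedPerm_det_eq_one_compound_mulVec_single [NeZero d] (σ τ : Combination d k) :
    ∃ Q : Matrix (Fin d) (Fin d) ℝ, IsSignedPerm Q ∧ Q.det = 1 ∧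
      ∃ a : ℝ, a ≠ 0 ∧ compound k Q *ᵥ Pi.single σ 1 = a • Pi.single τ 1 := by
  obtain ⟨e, he⟩ := Perm.exists_extending_pair τ.1 σ.1 τ.2.injective σ.2.injective
  set s : ℝ := ((Perm.sign e : ℤ) : ℝ)
  have hs : s = 1 ∨ s = -1 := by
    rcases Int.units_eq_one_or (Perm.sign e) with h | h <;> simp [s, h]
  set c : Fin d → ℝ := Pi.mulSingle 0 s
  have hc : ∀ i, c i = 1 ∨ c i = -1 := fun i => by
    by_cases h : i = 0 <;> simp [c, h, hs]
  refine ⟨_, isSignedPerm_diagonal_submatrix hc e, ?_, ∏ j, c (σ.1 j), ?_,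
    compound_diagonal_submatrix_mulVec_single c he⟩
  · rw [det_permute, det_diagonal]
    change s * ∏ i, Pi.mulSingle 0 s i = 1
    rw [Finset.prod_pi_mulSingle', if_pos (Finset.mem_univ _)]
    rcases hs with h | h <;> simp [h]
  · exact Finset.prod_ne_zero_iff.2 fun j _ => by rcases hc (σ.1 j) with h | h <;> simp [h]

end SignedPermutations

theorem compound_rep_irreducible_general
    (n k : ℕ) (hn : 1 ≤ n) (hkn : k ≠ n)
    (W : Submodule ℝ ({f : Fin k → Fin (2*n) // StrictMono f} → ℝ))
    (hW : ∀ Q : Matrix (Fin (2*n)) (Fin (2*n)) ℝ, IsSignedPerm Q → Q.det = 1 →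
      ∀ w ∈ W, (compound k Q).mulVec w ∈ W) :
    W = ⊥ ∨ W = ⊤ := by
  refine or_iff_not_imp_left.2 fun hW0 => ?_
  have : NeZero (2 * n) := ⟨by omega⟩
  let weights : Set (Combination (2 * n) k → ℝ) :=
    {χ | ∃ ε : Fin (2 * n) → ℝ, (∀ i, ε i = 1 ∨ ε i = -1) ∧ ∏ i, ε i = 1 ∧
      χ = fun σ => ∏ j, ε (σ.1 j)}
  have hweights : ∀ χ ∈ weights, ∀ v ∈ W, χ * v ∈ W := by
    rintro _ ⟨ε, hε, hprod, rfl⟩ v hv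
    rw [← compound_diagonal_mulVec]
    exact hW _ (by simpa using isSignedPerm_diagonal_submatrix hε 1) (by rwa [det_diagonal]) v hv
  have hsep : Pairwise fun σ τ => ∃ χ ∈ weights, χ σ ≠ χ τ := fun σ τ h => by
    obtain ⟨ε, hε, hprod, hne⟩ := Combination.exists_sign_prod_ne h (by omega)
    exact ⟨_, ⟨ε, hε, hprod, rfl⟩, hne⟩
  obtain ⟨σ, hσ⟩ := Submodule.exists_single_mem_of_mul_mem hweights hsep hW0
  refine Submodule.eq_top_of_forall_single_mem fun τ => ?_
  obtain ⟨Q, hQ, hdet, a, ha, hQσ⟩ := exists_isSignedPerm_det_eq_one_compound_mulVec_single σ τ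
  have := hW Q hQ hdet _ hσ
  rwa [hQσ, Submodule.smul_mem_iff _ ha] at this

/-- For `1 ≤ k ≤ 2n` with `k ≠ n`, the compound-matrix representation `φ_k` of the group
`Sym⁺(2,2n)` of `2n × 2n` signed permutation matrices with determinant `1` is irreducible:
the only subspaces `W ⊆ ℝ^{C(2n,k)}` invariant under `φ_k(Q)` for every such `Q` are
`{0}` and the whole space. -/
theorem compound_rep_irreducible
    (n k : ℕ) (hn : 1 ≤ n) (hk : 1 ≤ k) (hk2n : k ≤ 2*n) (hkn : k ≠ n)
    (W : Submodule ℝ ({f : Fin k → Fin (2*n) // StrictMono f} → ℝ))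
    (hW : ∀ Q : Matrix (Fin (2*n)) (Fin (2*n)) ℝ, IsSignedPerm Q → Q.det = 1 →
      ∀ w ∈ W, (compound k Q).mulVec w ∈ W) :
    W = ⊥ ∨ W = ⊤ :=
  compound_rep_irreducible_general n k hn hkn W hW
end

section
/- Let d ≥ 1 and 1 ≤ j ≤ d. For all j-combinations σ, τ of {0,…,d−1}: Σ_{Q ∈ Sym⁺(2,d)} det(Q_{σ,τ})² = (2^{d−1} · d!) / binom(d,j); equivalently, the number of d×d signed permutation matrices Q with determinant 1 such that det(Q_{σ,τ}) ≠ 0 equals |Sym⁺(2,d)| / binom(d,j). -/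
open Classical

/-!
A signed permutation matrix is `diag ε * P_π` for a unique permutation `π` and sign vector
`ε ∈ {±1}^d`, and its determinant is `sign π * ∏ ε i`; for each `π` exactly half of the `2^d`
sign vectors give determinant `1`. The minor `Q_{σ,τ}` is again a signed permutation matrix, so
has `det² = 1`, when `π` maps `range σ` onto `range τ`, and has a zero row otherwise. Exactly
`j! (d-j)! = d! / C(d,j)` permutations map one `j`-set onto another.
-/

open Finset Matrix Equiv

theorem exists_perm_comp_eq_of_range_subset {m n : Type*} [Finite m] {f τ : m → n}
    (hf : Function.Injective f) (h : ∀ a, f a ∈ Set.range τ) :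
    ∃ e : Perm m, ∀ a, f a = τ (e a) := by
  choose g hg using h
  have hg_inj : Function.Injective g := fun a b hab => hf (by rw [← hg a, ← hg b, hab])
  exact ⟨Equiv.ofBijective g (Finite.injective_iff_bijective.mp hg_inj), fun a => (hg a).symm⟩

section signedPermMatrix

variable {n m R : Type*} [Fintype n] [DecidableEq n]

variable (R) in
noncomputable def signedPermMatrix [CommRing R] (π : Perm n) (ε : n → ℤˣ) : Matrix n n R :=
  diagonal (fun i => ((ε i : ℤ) : R)) * π.permMatrix R

variable [CommRing R]

theorem signedPermMatrix_apply (π : Perm n) (ε : n → ℤˣ) (i k : n) :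
    signedPermMatrix R π ε i k = if π i = k then ((ε i : ℤ) : R) else 0 := by
  simp [signedPermMatrix, diagonal_mul, PEquiv.toMatrix_apply, Equiv.toPEquiv_apply]

theorem det_signedPermMatrix (π : Perm n) (ε : n → ℤˣ) :
    (signedPermMatrix R π ε).det = (((∏ i, ε i) * Perm.sign π : ℤˣ) : ℤ) := by
  simp [signedPermMatrix, det_mul, det_diagonal, det_permutation]

theorem det_signedPermMatrix_sq (π : Perm n) (ε : n → ℤˣ) :
    (signedPermMatrix R π ε).det ^ 2 = 1 := by
  rw [det_signedPermMatrix, ← Int.cast_pow, ← Units.val_pow_eq_pow_val, Int.units_sq]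
  simp

theorem signedPermMatrix_inj [CharZero R] {π π' : Perm n} {ε ε' : n → ℤˣ} :
    signedPermMatrix R π ε = signedPermMatrix R π' ε' ↔ π = π' ∧ ε = ε' := by
  refine ⟨fun h => ?_, by rintro ⟨rfl, rfl⟩; rfl⟩
  have hπ : π = π' := by
    ext i
    by_contra hne
    have := congrFun (congrFun h i) (π i)
    simp [signedPermMatrix_apply, Ne.symm hne] at this
  subst hπ
  refine ⟨rfl, funext fun i => Units.ext ?_⟩
  simpa [signedPermMatrix_apply] using congrFun (congrFun h i) (π i)

theorem submatrix_signedPermMatrix [Fintype m] [DecidableEq m] {σ τ : m → n}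
    (hτ : Function.Injective τ) (π : Perm n) (ε : n → ℤˣ) (e : Perm m)
    (he : ∀ a, π (σ a) = τ (e a)) :
    (signedPermMatrix R π ε).submatrix σ τ = signedPermMatrix R e (ε ∘ σ) := by
  ext a c
  simp [signedPermMatrix_apply, he, hτ.eq_iff]

theorem det_submatrix_signedPermMatrix_sq_eq_one [Fintype m] [DecidableEq m] {σ τ : m → n}
    (hσ : Function.Injective σ) (hτ : Function.Injective τ) {π : Perm n} (ε : n → ℤˣ)
    (h : ∀ a, π (σ a) ∈ Set.range τ) :
    ((signedPermMatrix R π ε).submatrix σ τ).det ^ 2 = 1 := by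
  obtain ⟨e, he⟩ := exists_perm_comp_eq_of_range_subset (π.injective.comp hσ) h
  rw [submatrix_signedPermMatrix hτ π ε e he, det_signedPermMatrix_sq]

theorem det_submatrix_signedPermMatrix_eq_zero [Fintype m] [DecidableEq m] {σ τ : m → n}
    {π : Perm n} (ε : n → ℤˣ) (h : ¬∀ a, π (σ a) ∈ Set.range τ) :
    ((signedPermMatrix R π ε).submatrix σ τ).det = 0 := by
  obtain ⟨a, ha⟩ := not_forall.mp h
  refine det_eq_zero_of_row_eq_zero a fun c => ?_
  have hc : π (σ a) ≠ τ c := fun h => ha ⟨c, h.symm⟩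
  simp [signedPermMatrix_apply, hc]

theorem det_submatrix_signedPermMatrix_sq [Fintype m] [DecidableEq m] {σ τ : m → n}
    (hσ : Function.Injective σ) (hτ : Function.Injective τ) (π : Perm n) (ε : n → ℤˣ)
    [Decidable (∀ a, π (σ a) ∈ Set.range τ)] :
    ((signedPermMatrix R π ε).submatrix σ τ).det ^ 2 =
      if ∀ a, π (σ a) ∈ Set.range τ then 1 else 0 := by
  split_ifs with h
  · exact det_submatrix_signedPermMatrix_sq_eq_one hσ hτ ε h
  · rw [det_submatrix_signedPermMatrix_eq_zero ε h, zero_pow two_ne_zero]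

theorem det_submatrix_signedPermMatrix_ne_zero_iff [Nontrivial R] [Fintype m] [DecidableEq m]
    {σ τ : m → n} (hσ : Function.Injective σ) (hτ : Function.Injective τ) (π : Perm n)
    (ε : n → ℤˣ) :
    ((signedPermMatrix R π ε).submatrix σ τ).det ≠ 0 ↔ ∀ a, π (σ a) ∈ Set.range τ := by
  refine ⟨fun hne => by_contra fun h => hne (det_submatrix_signedPermMatrix_eq_zero ε h),
    fun h hzero => ?_⟩
  simpa [hzero] using det_submatrix_signedPermMatrix_sq_eq_one (R := R) hσ hτ ε h

end signedPermMatrix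

theorem isSignedPerm_iff_exists {d : ℕ} (Q : Matrix (Fin d) (Fin d) ℝ) :
    IsSignedPerm Q ↔ ∃ π ε, signedPermMatrix ℝ π ε = Q := by
  constructor
  · rintro ⟨hval, hrow, hcol⟩
    choose g hg using fun i => (hrow i).exists
    have hg_inj : Function.Injective g := fun i i' h =>
      (hcol (g i)).unique (hg i) (h ▸ hg i')
    have hunit : ∀ i, ∃ u : ℤˣ, ((u : ℤ) : ℝ) = Q i (g i) := fun i => by
      rcases hval i (g i) with h | h | h
      · exact absurd h (hg i)
      · exact ⟨1, by simp [h]⟩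
      · exact ⟨-1, by simp [h]⟩
    choose ε hε using hunit
    refine ⟨Equiv.ofBijective g (Finite.injective_iff_bijective.mp hg_inj), ε, ?_⟩
    ext i k
    rw [signedPermMatrix_apply, Equiv.ofBijective_apply]
    split_ifs with h
    · rw [hε, h]
    · by_contra hne
      exact h ((hrow i).unique (hg i) (Ne.symm hne))
  · rintro ⟨π, ε, rfl⟩
    refine ⟨fun i k => ?_, fun i => ⟨π i, ?_, fun k hk => ?_⟩,
      fun k => ⟨π.symm k, ?_, fun i hi => ?_⟩⟩
    · rcases Int.units_eq_one_or (ε i) with h | h <;>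
        by_cases hk : π i = k <;> simp [signedPermMatrix_apply, h, hk]
    · simp [signedPermMatrix_apply]
    · by_contra hne
      exact hk (by simp [signedPermMatrix_apply, Ne.symm hne])
    · simp [signedPermMatrix_apply]
    · by_contra hne
      have hik : π i ≠ k := fun h => hne (π.eq_symm_apply.mpr h)
      exact hi (by simp [signedPermMatrix_apply, hik])

theorem card_filter_prod_units_eq {n : Type*} [Fintype n] [DecidableEq n] [Nonempty n] (u : ℤˣ) :
    #{ε : n → ℤˣ | ∏ i, ε i = u} = 2 ^ (Fintype.card n - 1) := by
  let f : (n → ℤˣ) →* ℤˣ :=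
    { toFun := fun ε => ∏ i, ε i, map_one' := by simp, map_mul' := fun _ _ => prod_mul_distrib }
  -- all fibres of the surjective homomorphism `f` have the same size
  obtain ⟨i⟩ := ‹Nonempty n›
  have hsurj : ∀ v, v ∈ Set.range f := fun v => ⟨Pi.mulSingle i v, Fintype.prod_pi_mulSingle' i v⟩
  have htotal : 2 ^ Fintype.card n = 2 * #{ε | f ε = u} := by
    calc 2 ^ Fintype.card n = Fintype.card (n → ℤˣ) := by simp [Fintype.card_units_int]
      _ = ∑ v : ℤˣ, #{ε | f ε = v} := card_eq_sum_card_fiberwise fun _ _ => mem_univ _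
      _ = 2 * #{ε | f ε = u} := by
        simp [MonoidHom.card_fiber_eq_of_mem_range f (hsurj _) (hsurj u)]
  change #{ε | f ε = u} = _
  have hpow : 2 ^ Fintype.card n = 2 * 2 ^ (Fintype.card n - 1) := by
    rw [← pow_succ', Nat.sub_add_cancel Fintype.card_pos]
  omega

theorem card_det_signedPermMatrix_eq_one {n R : Type*} [Fintype n] [DecidableEq n] [Nonempty n]
    [CommRing R] [CharZero R] (π : Perm n) :
    #{ε | (signedPermMatrix R π ε).det = 1} = 2 ^ (Fintype.card n - 1) := by
  have hdet : ∀ ε, (signedPermMatrix R π ε).det = 1 ↔ ∏ i, ε i = Perm.sign π := fun ε => by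
    rw [det_signedPermMatrix, Int.cast_eq_one, Units.val_eq_one, mul_eq_one_iff_eq_inv,
      Int.units_inv_eq_self]
  simp_rw [hdet]
  exact card_filter_prod_units_eq _

theorem Equiv.Perm.apply_mem_iff_of_mapsTo {α : Type*} {s t : Finset α}
    (hst : #s = #t) {π : Perm α} (h : ∀ x ∈ s, π x ∈ t) (x : α) : π x ∈ t ↔ x ∈ s := by
  have hmap : s.map π.toEmbedding = t :=
    eq_of_subset_of_card_le (fun y hy => by obtain ⟨x, hx, rfl⟩ := mem_map.mp hy; exact h x hx)
      (by simp [hst])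
  rw [← hmap, mem_map_equiv, Equiv.symm_apply_apply]

theorem card_perm_mapsTo {α : Type*} [Fintype α] [DecidableEq α] {s t : Finset α}
    (hst : #s = #t) :
    #{π : Perm α | ∀ x ∈ s, π x ∈ t} = (#s).factorial * (Fintype.card α - #s).factorial := by
  have hiff := fun (π : {π : Perm α // ∀ x ∈ s, π x ∈ t}) x =>
    (π.1.apply_mem_iff_of_mapsTo hst π.2 x).symm
  let split : {π : Perm α // ∀ x ∈ s, π x ∈ t} ≃
      ({x // x ∈ s} ≃ {x // x ∈ t}) × ({x // x ∉ s} ≃ {x // x ∉ t}) :=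
    { toFun := fun π => (π.1.subtypeEquiv (hiff π), π.1.subtypeEquiv fun x => not_congr (hiff π x))
      invFun := fun e => ⟨Equiv.subtypeCongr e.1 e.2, fun x hx => by
        simp [Equiv.subtypeCongr, Equiv.sumCompl_symm_apply_of_pos hx]⟩
      left_inv := fun π => by
        ext x
        by_cases hx : x ∈ s <;> simp [Equiv.subtypeCongr, hx]
      right_inv := fun e => by
        ext x <;> simp [Equiv.subtypeCongr, x.2] }
  have hcompl : Fintype.card {x // x ∉ s} = Fintype.card {x // x ∉ t} := by
    simp [Fintype.card_subtype_compl, hst]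
  rw [← Fintype.card_subtype, Fintype.card_congr split, Fintype.card_prod,
    Fintype.card_equiv (Fintype.equivOfCardEq (by simp [hst])),
    Fintype.card_equiv (Fintype.equivOfCardEq hcompl), Fintype.card_coe,
    Fintype.card_subtype_compl, Fintype.card_coe]

theorem card_perm_comp_mem_range {m α : Type*} [Fintype m] [Fintype α] [DecidableEq α]
    {σ τ : m → α} (hσ : Function.Injective σ) (hτ : Function.Injective τ)
    [DecidablePred fun π : Perm α => ∀ a, π (σ a) ∈ Set.range τ] :
    #{π : Perm α | ∀ a, π (σ a) ∈ Set.range τ} =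
      (Fintype.card m).factorial * (Fintype.card α - Fintype.card m).factorial := by
  have := card_perm_mapsTo (s := univ.image σ) (t := univ.image τ)
    (by rw [card_image_of_injective _ hσ, card_image_of_injective _ hτ])
  rw [card_image_of_injective _ hσ, card_univ] at this
  convert this using 2
  simp

theorem sum_symPlus_eq_two_pow_mul {d : ℕ} (hd : 1 ≤ d) {S : Finset (Matrix (Fin d) (Fin d) ℝ)}
    (hS : ∀ Q, Q ∈ S ↔ IsSignedPerm Q ∧ Q.det = 1) (f : Matrix (Fin d) (Fin d) ℝ → ℝ)
    (g : Perm (Fin d) → ℝ) (hfg : ∀ π ε, f (signedPermMatrix ℝ π ε) = g π) :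
    ∑ Q ∈ S, f Q = 2 ^ (d - 1) * ∑ π, g π := by
  have : Nonempty (Fin d) := Fin.pos_iff_nonempty.mp hd
  have hSeq : S = image (fun p => signedPermMatrix ℝ p.1 p.2)
      {p : Perm (Fin d) × (Fin d → ℤˣ) | (signedPermMatrix ℝ p.1 p.2).det = 1} := by
    ext Q
    simp only [hS, isSignedPerm_iff_exists, mem_image, mem_filter, mem_univ, true_and,
      Prod.exists]
    constructor
    · rintro ⟨⟨π, ε, rfl⟩, hdet⟩
      exact ⟨π, ε, hdet, rfl⟩
    · rintro ⟨π, ε, hdet, rfl⟩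
      exact ⟨⟨π, ε, rfl⟩, hdet⟩
  rw [hSeq, sum_image fun p _ q _ h => Prod.ext_iff.mpr (signedPermMatrix_inj.mp h), sum_filter,
    Fintype.sum_prod_type, mul_sum]
  refine sum_congr rfl fun π _ => ?_
  simp_rw [hfg]
  rw [← sum_filter, sum_const, card_det_signedPermMatrix_eq_one, nsmul_eq_mul, Fintype.card_fin]
  push_cast
  ring

theorem signedPerm_subdeterminant_density_general
    (d j : ℕ) (hd : 1 ≤ d) (hjd : j ≤ d)
    (S : Finset (Matrix (Fin d) (Fin d) ℝ))
    (hS : ∀ Q, Q ∈ S ↔ IsSignedPerm Q ∧ Q.det = 1)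
    (σ τ : Fin j → Fin d) (hσ : StrictMono σ) (hτ : StrictMono τ) :
    (∑ Q ∈ S, ((Q.submatrix σ τ).det) ^ 2 =
        (2 ^ (d-1) * d.factorial : ℝ) / (d.choose j : ℝ)) ∧
    (((S.filter fun Q => (Q.submatrix σ τ).det ≠ 0).card : ℝ) =
        (S.card : ℝ) / (d.choose j : ℝ)) := by
  have hsq := fun π ε => det_submatrix_signedPermMatrix_sq (R := ℝ) hσ.injective hτ.injective π ε
  have hne : ∀ π ε, (if ((signedPermMatrix ℝ π ε).submatrix σ τ).det ≠ 0 then 1 else 0 : ℝ) =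
      if ∀ a, π (σ a) ∈ Set.range τ then 1 else 0 := fun π ε =>
    if_congr (det_submatrix_signedPermMatrix_ne_zero_iff hσ.injective hτ.injective π ε) rfl rfl
  have hcount : ∑ π : Perm (Fin d), (if ∀ a, π (σ a) ∈ Set.range τ then 1 else 0 : ℝ) =
      d.factorial / d.choose j := by
    rw [sum_boole, card_perm_comp_mem_range hσ.injective hτ.injective, Nat.cast_choose ℝ hjd,
      Fintype.card_fin, Fintype.card_fin]
    field_simp
    simp
  have hcard : (S.card : ℝ) = 2 ^ (d - 1) * d.factorial := by
    rw [card_eq_sum_ones, Nat.cast_sum, sum_symPlus_eq_two_pow_mul hd hS _ (fun _ => 1)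
      fun _ _ => Nat.cast_one]
    simp [Fintype.card_perm]
  refine ⟨?_, ?_⟩
  · rw [sum_symPlus_eq_two_pow_mul hd hS _ _ hsq, hcount]
    ring
  · rw [← sum_boole, sum_symPlus_eq_two_pow_mul hd hS _ _ hne, hcount, hcard]
    ring

/-- Let `S = Sym⁺(2,d)` be the (finite) set of `d × d` signed permutation matrices with
determinant `1`, and let `σ, τ` be `j`-combinations (strictly increasing tuples). Then
`∑_{Q ∈ S} det (Q_{σ,τ})² = 2^{d-1} d! / C(d,j)`; equivalently, the number of `Q ∈ S`
with `det (Q_{σ,τ}) ≠ 0` equals `|S| / C(d,j)`. -/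
theorem signedPerm_subdeterminant_density
    (d j : ℕ) (hd : 1 ≤ d) (hj : 1 ≤ j) (hjd : j ≤ d)
    (S : Finset (Matrix (Fin d) (Fin d) ℝ))
    (hS : ∀ Q, Q ∈ S ↔ IsSignedPerm Q ∧ Q.det = 1)
    (σ τ : Fin j → Fin d) (hσ : StrictMono σ) (hτ : StrictMono τ) :
    (∑ Q ∈ S, ((Q.submatrix σ τ).det) ^ 2 =
        (2 ^ (d-1) * d.factorial : ℝ) / (d.choose j : ℝ)) ∧
    (((S.filter fun Q => (Q.submatrix σ τ).det ≠ 0).card : ℝ) =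
        (S.card : ℝ) / (d.choose j : ℝ)) :=
  signedPerm_subdeterminant_density_general d j hd hjd S hS σ τ hσ hτ
end

section
/- Let d ≥ 1, 1 ≤ k ≤ d, and let μ, ν be k-combinations of {0,…,d−1} such that μ ≠ ν and the underlying set of ν is not the complement in {0,…,d−1} of the underlying set of μ. Then Σ_{Q ∈ Sym⁺(2,d)} det(Q_{μ,μ}) · det(Q_{ν,ν}) = 0. -/
/-!
Let `A` and `B` be the index sets of `μ` and `ν`. They differ and are not complementary, so
there are `i ∈ A ∆ B` and `j ∉ A ∆ B`. Right multiplication by the diagonal matrix `D` with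
entries `-1` at `i, j` and `1` elsewhere is an involution of `Sym⁺(2,d)`, and it multiplies
`det Q_{A,A}` and `det Q_{B,B}` by `(-1)^|A ∩ {i,j}|` and `(-1)^|B ∩ {i,j}|`, whose product is
`(-1)^|(A ∆ B) ∩ {i,j}| = -1`. So the summands cancel in pairs `Q, QD`.
-/

open Classical

open Finset Matrix

open scoped symmDiff

theorem Finset.sum_eq_zero_of_involution_neg {ι R : Type*} [NonAssocRing R] [NoZeroDivisors R]
    [CharZero R] {s : Finset ι} {f : ι → R} (g : ι → ι) (hf : ∀ a ∈ s, f (g a) = -f a)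
    (hmem : ∀ a ∈ s, g a ∈ s) (hinv : ∀ a ∈ s, g (g a) = a) :
    ∑ x ∈ s, f x = 0 := by
  refine sum_involution (fun a _ => g a) (fun a ha => by simp [hf a ha])
    (fun a ha hfa hga => hfa ?_) hmem (fun a ha => hinv a ha)
  have := hf a ha
  rw [hga, eq_neg_iff_add_eq_zero, add_self_eq_zero] at this
  exact this

theorem StrictMono.image_univ_inj {ι α : Type*} [Fintype ι] [LinearOrder ι] [Preorder α]
    [DecidableEq α] {f g : ι → α} (hf : StrictMono f) (hg : StrictMono g) :
    univ.image f = univ.image g ↔ f = g := by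
  rw [← hf.range_inj hg, ← coe_inj, coe_image, coe_image, coe_univ, Set.image_univ,
    Set.image_univ]

section Cardinality

variable {α : Type*} [DecidableEq α]

theorem Finset.card_inter_add_card_inter (A B T : Finset α) :
    #(A ∩ T) + #(B ∩ T) = #(A ∆ B ∩ T) + 2 * #(A ∩ B ∩ T) := by
  have hunion : A ∩ T ∪ B ∩ T = A ∆ B ∩ T ∪ A ∩ B ∩ T := by
    ext x; simp only [mem_union, mem_inter, mem_symmDiff]; tauto
  have hdisj : Disjoint (A ∆ B ∩ T) (A ∩ B ∩ T) := by
    rw [disjoint_left]; intro x; simp only [mem_inter, mem_symmDiff]; tauto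
  have hinter : A ∩ T ∩ (B ∩ T) = A ∩ B ∩ T := by
    ext x; simp only [mem_inter]; tauto
  rw [← card_union_add_card_inter, hunion, card_union_of_disjoint hdisj, hinter]
  ring

theorem Finset.neg_one_pow_card_inter_mul {R : Type*} [Monoid R] [HasDistribNeg R]
    (A B T : Finset α) :
    (-1 : R) ^ #(A ∩ T) * (-1) ^ #(B ∩ T) = (-1) ^ #(A ∆ B ∩ T) := by
  rw [← pow_add, card_inter_add_card_inter, pow_add, pow_mul]
  simp

theorem Finset.exists_card_eq_two_card_inter_eq_one [Fintype α] {U : Finset α}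
    (hU : U.Nonempty) (hU' : U ≠ univ) : ∃ T : Finset α, #T = 2 ∧ #(U ∩ T) = 1 := by
  obtain ⟨i, hi⟩ := hU
  obtain ⟨j, hj⟩ : ∃ j, j ∉ U := by
    by_contra! h
    exact hU' (eq_univ_iff_forall.2 h)
  have hij : i ≠ j := ne_of_mem_of_not_mem hi hj
  refine ⟨{i, j}, card_pair hij, ?_⟩
  rw [inter_insert_of_mem hi, inter_singleton_of_notMem hj, insert_empty, card_singleton]

end Cardinality

section SignFlip

variable {n R : Type*} [DecidableEq n]

def negOn [Ring R] (T : Finset n) (x : n) : R := if x ∈ T then -1 else 1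

theorem negOn_eq_one_or_eq_neg_one [Ring R] (T : Finset n) (x : n) :
    negOn (R := R) T x = 1 ∨ negOn (R := R) T x = -1 := by
  unfold negOn; split_ifs <;> simp

theorem negOn_mul_self [Ring R] (T : Finset n) (x : n) :
    negOn (R := R) T x * negOn T x = 1 := by
  unfold negOn; split_ifs <;> simp

theorem prod_negOn [CommRing R] (A T : Finset n) :
    ∏ x ∈ A, negOn (R := R) T x = (-1) ^ #(A ∩ T) := by
  rw [← prod_const, ← prod_ite_mem]
  rfl

variable [Fintype n] [CommRing R]

theorem diagonal_negOn_mul_self (T : Finset n) :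
    diagonal (negOn (R := R) T) * diagonal (negOn T) = 1 := by
  rw [diagonal_mul_diagonal, ← diagonal_one]
  exact congrArg diagonal (funext (negOn_mul_self T))

theorem det_diagonal_negOn (T : Finset n) : (diagonal (negOn (R := R) T)).det = (-1) ^ #T := by
  rw [det_diagonal, prod_negOn, univ_inter]

theorem det_submatrix_mul_diagonal {k : Type*} [Fintype k] [DecidableEq k] (Q : Matrix n n R)
    (ε : n → R) (f : k → n) :
    ((Q * diagonal ε).submatrix f f).det = (Q.submatrix f f).det * ∏ t, ε (f t) := by
  have : (Q * diagonal ε).submatrix f f = Q.submatrix f f * diagonal (ε ∘ f) := by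
    ext a b; simp [mul_diagonal]
  rw [this, det_mul, det_diagonal, Function.comp_def]

theorem det_submatrix_mul_diagonal_negOn {k : Type*} [Fintype k] [DecidableEq k]
    (Q : Matrix n n R) (T : Finset n) {f : k → n} (hf : Function.Injective f) :
    ((Q * diagonal (negOn T)).submatrix f f).det =
      (-1) ^ #(univ.image f ∩ T) * (Q.submatrix f f).det := by
  rw [det_submatrix_mul_diagonal, ← prod_negOn, prod_image hf.injOn, mul_comm]

end SignFlip

theorem IsSignedPerm.mul_diagonal {d : ℕ} {Q : Matrix (Fin d) (Fin d) ℝ} (hQ : IsSignedPerm Q)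
    {ε : Fin d → ℝ} (hε : ∀ x, ε x = 1 ∨ ε x = -1) : IsSignedPerm (Q * diagonal ε) := by
  obtain ⟨hentries, hrows, hcols⟩ := hQ
  have hε0 : ∀ x, ε x ≠ 0 := fun x => by rcases hε x with h | h <;> simp [h]
  have hne : ∀ a b, (Q * diagonal ε) a b ≠ 0 ↔ Q a b ≠ 0 := fun a b => by
    simp [Matrix.mul_diagonal, hε0 b]
  refine ⟨fun a b => ?_, fun a => ?_, fun b => ?_⟩
  · rw [Matrix.mul_diagonal]
    rcases hentries a b with h | h | h <;> rcases hε b with h' | h' <;> simp [h, h']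
  · exact (existsUnique_congr (hne a)).2 (hrows a)
  · exact (existsUnique_congr (hne · b)).2 (hcols b)

theorem signedPerm_offdiagonal_character_sum_general
    (d k : ℕ)
    (S : Finset (Matrix (Fin d) (Fin d) ℝ))
    (hS : ∀ Q, Q ∈ S ↔ IsSignedPerm Q ∧ Q.det = 1)
    (μ ν : Fin k → Fin d) (hμ : StrictMono μ) (hν : StrictMono ν)
    (hne : μ ≠ ν)
    (hcompl : Finset.image ν Finset.univ ≠ (Finset.image μ Finset.univ)ᶜ) :
    ∑ Q ∈ S, (Q.submatrix μ μ).det * (Q.submatrix ν ν).det = 0 := by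
  set A := univ.image μ
  set B := univ.image ν
  have hAB : (A ∆ B).Nonempty := symmDiff_nonempty.2 fun h => hne ((hμ.image_univ_inj hν).1 h)
  have hAB' : A ∆ B ≠ univ := fun h => hcompl <|
    eq_compl_iff_isCompl.2 ((symmDiff_eq_top A B).1 (h.trans top_eq_univ.symm)).symm
  obtain ⟨T, hT_card, hT_inter⟩ := exists_card_eq_two_card_inter_eq_one hAB hAB'
  set D : Matrix (Fin d) (Fin d) ℝ := diagonal (negOn T)
  refine sum_eq_zero_of_involution_neg (· * D) (fun Q _ => ?_) (fun Q hQ => ?_) (fun Q _ => ?_)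
  · rw [det_submatrix_mul_diagonal_negOn Q T hμ.injective,
      det_submatrix_mul_diagonal_negOn Q T hν.injective, mul_mul_mul_comm,
      neg_one_pow_card_inter_mul, hT_inter]
    ring
  · obtain ⟨hQ, hdet⟩ := (hS Q).1 hQ
    refine (hS _).2 ⟨hQ.mul_diagonal (negOn_eq_one_or_eq_neg_one T), ?_⟩
    rw [det_mul, hdet, det_diagonal_negOn, hT_card]
    norm_num
  · rw [mul_assoc, diagonal_negOn_mul_self, mul_one]

/-- Let `S = Sym⁺(2,d)` be the set of `d × d` signed permutation matrices with
determinant `1`, and let `μ ≠ ν` be `k`-combinations (strictly increasing tuples) such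
that the underlying set of `ν` is not the complement of the underlying set of `μ`. Then
`∑_{Q ∈ S} det (Q_{μ,μ}) · det (Q_{ν,ν}) = 0`. -/
theorem signedPerm_offdiagonal_character_sum
    (d k : ℕ) (hd : 1 ≤ d) (hk : 1 ≤ k) (hkd : k ≤ d)
    (S : Finset (Matrix (Fin d) (Fin d) ℝ))
    (hS : ∀ Q, Q ∈ S ↔ IsSignedPerm Q ∧ Q.det = 1)
    (μ ν : Fin k → Fin d) (hμ : StrictMono μ) (hν : StrictMono ν)
    (hne : μ ≠ ν)
    (hcompl : Finset.image ν Finset.univ ≠ (Finset.image μ Finset.univ)ᶜ) :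
    ∑ Q ∈ S, (Q.submatrix μ μ).det * (Q.submatrix ν ν).det = 0 :=
  signedPerm_offdiagonal_character_sum_general d k S hS μ ν hμ hν hne hcompl
end

section
/- Let d ≥ 1 and 1 ≤ j ≤ d, let G be a nonempty finite set of d×d signed permutation matrices, and let D be any set of j-combinations of {0,…,d−1}. For each j-combination τ define λ_τ := (1/|G|) · Σ_{Q∈G} Σ_{σ∈D} det(Q_{σ,τ})². Then the minimum of λ_τ over all j-combinations τ is at most |D| / binom(d,j). (In particular, no ensemble of signed permutation matrices can make all the quantities λ_τ exceed |D|/binom(d,j), which is the optimality underlying the claim that no subgroup of fermionic Gaussian Clifford unitaries achieves a smaller shadow norm than binom(2n,2k)/binom(n,k).) -/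
/-!
Row `i` of a signed permutation matrix `Q` is `±` the unit vector at some column `π i`, with `π`
injective. Hence the minor `Q_{σ,τ}` vanishes unless the columns `τ` are exactly `π ∘ σ` up to
order, and then it is orthogonal, so `det (Q_{σ,τ}) ^ 2 = 1`. Thus `∑_τ det (Q_{σ,τ}) ^ 2 = 1`
for every `Q` and `σ`, the `choose d j` numbers `λ_τ` sum to at most `|D|`, and the smallest of
them is at most their average.
-/

open Classical

theorem Fintype.card_subtype_strictMono (α : Type*) [Fintype α] [LinearOrder α] (j : ℕ) :
    Fintype.card {f : Fin j → α // StrictMono f} = (Fintype.card α).choose j := by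
  let e : {f : Fin j → α // StrictMono f} ≃ (Fin j ↪o α) :=
    { toFun := fun f => OrderEmbedding.ofStrictMono f.1 f.2
      invFun := fun f => ⟨f, f.strictMono⟩
      left_inv := fun _ => rfl
      right_inv := fun _ => rfl }
  rw [← Nat.card_eq_fintype_card, Nat.card_congr (e.trans Set.powersetCard.ofFinEmbEquiv),
    Set.powersetCard.card, Nat.card_eq_fintype_card]

theorem IsSignedPerm.exists_row_support {d : ℕ} {Q : Matrix (Fin d) (Fin d) ℝ}
    (hQ : IsSignedPerm Q) :
    ∃ π : Fin d → Fin d, Function.Injective π ∧ (∀ i, Q i (π i) ^ 2 = 1) ∧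
      ∀ i k, k ≠ π i → Q i k = 0 := by
  choose π hπ hπ_unique using hQ.2.1
  refine ⟨π, fun i i' h => ?_, fun i => ?_, fun i k hk => not_not.mp (mt (hπ_unique i k) hk)⟩
  · obtain ⟨k, -, hk⟩ := hQ.2.2 (π i)
    rw [hk i (hπ i), hk i' (h ▸ hπ i')]
  · rcases hQ.1 i (π i) with h | h | h
    · exact absurd h (hπ i)
    all_goals rw [h]; norm_num

namespace Matrix

theorem det_sq_eq_one_of_mul_transpose_eq_one {R ι : Type*} [CommRing R] [Fintype ι]
    [DecidableEq ι] {M : Matrix ι ι R} (hM : M * Mᵀ = 1) : M.det ^ 2 = 1 := by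
  simpa [sq] using congrArg det hM

variable {R : Type*} [CommRing R] {m n j : ℕ} {Q : Matrix (Fin m) (Fin n) R}
  {π : Fin m → Fin n}

theorem det_submatrix_eq_zero_of_not_mem_range (hzero : ∀ i k, k ≠ π i → Q i k = 0)
    (σ : Fin j → Fin m) {τ : Fin j → Fin n} {b : Fin j} (hb : τ b ∉ Set.range (π ∘ σ)) :
    (Q.submatrix σ τ).det = 0 :=
  det_eq_zero_of_column_eq_zero b fun a => hzero (σ a) (τ b) fun h => hb ⟨a, h.symm⟩

theorem submatrix_mul_transpose_eq_one (hπ : Function.Injective π)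
    (hsq : ∀ i, Q i (π i) ^ 2 = 1) (hzero : ∀ i k, k ≠ π i → Q i k = 0)
    {σ : Fin j → Fin m} (hσ : Function.Injective σ) {τ : Fin j → Fin n}
    (hτ : Function.Injective τ) (hστ : ∀ a, π (σ a) ∈ Set.range τ) :
    Q.submatrix σ τ * (Q.submatrix σ τ)ᵀ = 1 := by
  ext a a'
  obtain ⟨b, hb⟩ := hστ a
  have off_b : ∀ b', b' ≠ b → Q (σ a) (τ b') = 0 := fun b' hb' =>
    hzero _ _ (hb ▸ hτ.ne hb')
  rw [mul_apply, Finset.sum_eq_single b (fun b' _ hb' => by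
    rw [submatrix_apply, off_b b' hb', zero_mul]) (by simp)]
  simp only [submatrix_apply, transpose_apply, hb, one_apply]
  split_ifs with h
  · rw [h, ← sq, hsq]
  · rw [hzero (σ a') _ (hπ.ne (hσ.ne h)), mul_zero]

theorem sum_det_submatrix_sq_eq_one (hπ : Function.Injective π)
    (hsq : ∀ i, Q i (π i) ^ 2 = 1) (hzero : ∀ i k, k ≠ π i → Q i k = 0)
    {σ : Fin j → Fin m} (hσ : Function.Injective σ) :
    ∑ τ : {f : Fin j → Fin n // StrictMono f}, (Q.submatrix σ τ).det ^ 2 = 1 := by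
  set T := Finset.univ.image (π ∘ σ)
  have mem_T : ∀ k, k ∈ T ↔ k ∈ Set.range (π ∘ σ) := by simp [T]
  have hT : T.card = j := by
    rw [Finset.card_image_of_injective _ (hπ.comp hσ), Finset.card_univ, Fintype.card_fin]
  let τ₀ : {f : Fin j → Fin n // StrictMono f} :=
    ⟨T.orderEmbOfFin hT, (T.orderEmbOfFin hT).strictMono⟩
  rw [Fintype.sum_eq_single τ₀]
  · refine det_sq_eq_one_of_mul_transpose_eq_one <|
      submatrix_mul_transpose_eq_one hπ hsq hzero hσ (T.orderEmbOfFin hT).injective fun a => ?_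
    rw [Finset.range_orderEmbOfFin, Finset.mem_coe, mem_T]
    exact ⟨a, rfl⟩
  · intro τ hτ
    obtain ⟨b, hb⟩ : ∃ b, τ.1 b ∉ T := by
      by_contra! h
      exact hτ (Subtype.ext (Finset.orderEmbOfFin_unique hT h τ.2))
    rw [det_submatrix_eq_zero_of_not_mem_range hzero σ ((mem_T _).not.mp hb),
      zero_pow two_ne_zero]

end Matrix

theorem sum_avg_sum_det_submatrix_sq_le_card {d j : ℕ} {G : Finset (Matrix (Fin d) (Fin d) ℝ)}
    (hG : ∀ Q ∈ G, IsSignedPerm Q) (D : Finset {f : Fin j → Fin d // StrictMono f}) :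
    ∑ τ : {f : Fin j → Fin d // StrictMono f},
      (1 / (G.card : ℝ)) * ∑ Q ∈ G, ∑ σ ∈ D, (Q.submatrix σ.1 τ.1).det ^ 2 ≤ D.card := by
  have row_sum : ∀ Q ∈ G, ∀ σ : {f : Fin j → Fin d // StrictMono f},
      ∑ τ : {f : Fin j → Fin d // StrictMono f}, (Q.submatrix σ.1 τ.1).det ^ 2 = 1 := by
    intro Q hQ σ
    obtain ⟨_, hπ, hsq, hzero⟩ := (hG Q hQ).exists_row_support
    exact Matrix.sum_det_submatrix_sq_eq_one hπ hsq hzero σ.2.injective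
  calc _ = (G.card / G.card : ℝ) * D.card := by
        rw [← Finset.mul_sum, Finset.sum_comm]
        simp_rw [Finset.sum_comm (s := Finset.univ)]
        rw [Finset.sum_congr rfl fun Q hQ => Finset.sum_congr rfl fun σ _ => row_sum Q hQ σ]
        simp only [Finset.sum_const, nsmul_eq_mul, mul_one]
        ring
    _ ≤ D.card := mul_le_of_le_one_left (Nat.cast_nonneg _) (div_self_le_one _)

theorem min_frame_eigenvalue_le_general
    (d j : ℕ) (hjd : j ≤ d)
    (G : Finset (Matrix (Fin d) (Fin d) ℝ))
    (hG1 : ∀ Q ∈ G, IsSignedPerm Q)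
    (D : Finset {f : Fin j → Fin d // StrictMono f}) :
    ∃ τ : {f : Fin j → Fin d // StrictMono f},
      (1 / (G.card : ℝ)) * ∑ Q ∈ G, ∑ σ ∈ D, ((Q.submatrix σ.1 τ.1).det) ^ 2 ≤
        (D.card : ℝ) / (d.choose j : ℝ) := by
  have hcard : Fintype.card {f : Fin j → Fin d // StrictMono f} = d.choose j := by
    rw [Fintype.card_subtype_strictMono, Fintype.card_fin]
  have hchoose : (d.choose j : ℝ) ≠ 0 := by exact_mod_cast (Nat.choose_pos hjd).ne'
  have : Nonempty {f : Fin j → Fin d // StrictMono f} :=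
    Fintype.card_pos_iff.mp (hcard ▸ Nat.choose_pos hjd)
  have average : ∑ _τ : {f : Fin j → Fin d // StrictMono f}, (D.card : ℝ) / d.choose j =
      D.card := by
    rw [Finset.sum_const, Finset.card_univ, hcard, nsmul_eq_mul, mul_div_cancel₀ _ hchoose]
  obtain ⟨τ, -, hτ⟩ := Finset.exists_le_of_sum_le Finset.univ_nonempty
    ((sum_avg_sum_det_submatrix_sq_le_card hG1 D).trans average.ge)
  exact ⟨τ, hτ⟩

/-- Let `G` be a nonempty finite set of `d × d` signed permutation matrices and `D` any
set of `j`-combinations (strictly increasing tuples). For each `j`-combination `τ` set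
`λ_τ := (1/|G|) ∑_{Q ∈ G} ∑_{σ ∈ D} det (Q_{σ,τ})²`. Then the minimum of `λ_τ` over all
`τ` is at most `|D| / C(d,j)`: some `τ` satisfies `λ_τ ≤ |D| / C(d,j)`. -/
theorem min_frame_eigenvalue_le
    (d j : ℕ) (hd : 1 ≤ d) (hj : 1 ≤ j) (hjd : j ≤ d)
    (G : Finset (Matrix (Fin d) (Fin d) ℝ)) (hG0 : G.Nonempty)
    (hG1 : ∀ Q ∈ G, IsSignedPerm Q)
    (D : Finset {f : Fin j → Fin d // StrictMono f}) :
    ∃ τ : {f : Fin j → Fin d // StrictMono f},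
      (1 / (G.card : ℝ)) * ∑ Q ∈ G, ∑ σ ∈ D, ((Q.submatrix σ.1 τ.1).det) ^ 2 ≤
        (D.card : ℝ) / (d.choose j : ℝ) :=
  min_frame_eigenvalue_le_general d j hjd G hG1 D
end

section
/- Let (Ω, P) be a probability space, let L ≥ 1 and M ≥ 1 be integers, let ε, δ ∈ (0,1), and for each j ∈ {1,…,L} let B_j > 0 and let X^j_1, …, X^j_M be independent, identically distributed real random variables satisfying |X^j_i| ≤ B_j almost surely and E[(X^j_i)²] ≤ B_j. If M ≥ (1 + ε/3) · (2 · log(2L/δ) / ε²) · max_{1≤j≤L} B_j, then with probability at least 1 − δ, simultaneously for all j ∈ {1,…,L}: | (1/M) Σ_{i=1}^M X^j_i − E[X^j_1] | ≤ ε. -/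
/-!
Bernstein's inequality plus a union bound. Comparing the exponential series with a geometric one
(`(n + 2)! ≥ 2 · 3ⁿ`) gives `eˣ ≤ 1 + x + x² / (2 (1 - a/3))` for `|x| ≤ a < 3`; hence a variable
bounded by `b` with second moment at most `v` has `E e^{tY} ≤ exp (t E Y + t² v / (2 (1 - t b/3)))`
whenever `t b < 3`. The Chernoff bound with `t = s / (v + b s/3)` then controls each tail of a sum of
`n` independent such variables by `exp (-n s² / (2 (v + b s/3)))`. For `v = b = B_j` and `s = ε`
the sample-size condition makes this at most `δ / (2L)`, and the `2L` tails add up to `δ`.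
-/

open MeasureTheory ProbabilityTheory Real
open scoped Nat

theorem Nat.two_mul_three_pow_le_factorial (n : ℕ) : 2 * 3 ^ n ≤ (n + 2)! := by
  simpa [add_comm n 2] using Nat.factorial_mul_pow_le_factorial (m := 2) (n := n)

theorem Real.exp_le_one_add_add_sq_div {x a : ℝ} (hx : |x| ≤ a) (ha : a < 3) :
    exp x ≤ 1 + x + x ^ 2 / (2 * (1 - a / 3)) := by
  have ha0 : 0 ≤ a := (abs_nonneg x).trans hx
  have htail : HasSum (fun n : ℕ => x ^ (n + 2) / (n + 2)!) (exp x - 1 - x) := by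
    have := (hasSum_nat_add_iff' 2).mpr (NormedSpace.expSeries_div_hasSum_exp x)
    simpa [← exp_eq_exp_ℝ, Finset.sum_range_succ, sub_sub] using this
  have hgeom : HasSum (fun n : ℕ => x ^ 2 / 2 * (a / 3) ^ n) (x ^ 2 / 2 * (1 - a / 3)⁻¹) :=
    (hasSum_geometric_of_lt_one (by positivity) (by linarith)).mul_left _
  have hterm (n : ℕ) : x ^ (n + 2) / (n + 2)! ≤ x ^ 2 / 2 * (a / 3) ^ n := by
    have hfact : (2 * 3 ^ n : ℝ) ≤ (n + 2)! := by exact_mod_cast n.two_mul_three_pow_le_factorial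
    calc x ^ (n + 2) / (n + 2)! ≤ |x| ^ (n + 2) / (n + 2)! := by
          gcongr ?_ / _
          exact (le_abs_self _).trans (abs_pow x _).le
      _ ≤ |x| ^ (n + 2) / (2 * 3 ^ n) := by gcongr
      _ = x ^ 2 / 2 * (|x| / 3) ^ n := by rw [pow_add, div_pow, sq_abs]; ring
      _ ≤ x ^ 2 / 2 * (a / 3) ^ n := by gcongr
  have hsum_le := hasSum_le hterm htail hgeom
  rw [← div_eq_mul_inv, div_div] at hsum_le
  linarith

theorem two_mul_exp_neg_le_div_of_le {M B ε δ L : ℝ} (hB : 0 < B) (hε : 0 < ε) (hδ : 0 < δ)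
    (hL : 0 < L) (hM : (1 + ε / 3) * (2 * log (2 * L / δ) / ε ^ 2) * B ≤ M) :
    2 * exp (-(M * ε ^ 2) / (2 * (B + B * ε / 3))) ≤ δ / L := by
  have hscale : (1 + ε / 3) * (2 * log (2 * L / δ) / ε ^ 2) * B * ε ^ 2 =
      log (2 * L / δ) * (2 * (B + B * ε / 3)) := by field_simp
  calc 2 * exp (-(M * ε ^ 2) / (2 * (B + B * ε / 3))) ≤ 2 * exp (-log (2 * L / δ)) := by
        gcongr
        rw [neg_div, neg_le_neg_iff, le_div_iff₀ (by positivity)]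
        linarith [mul_le_mul_of_nonneg_right hM (sq_nonneg ε)]
    _ = δ / L := by rw [exp_neg, exp_log (by positivity), inv_div]; field_simp

namespace ProbabilityTheory

variable {Ω : Type*} [MeasurableSpace Ω] {P : Measure Ω} [IsProbabilityMeasure P]

theorem mgf_le_exp_of_abs_le {Y : Ω → ℝ} {b v t : ℝ} (hY : Measurable Y)
    (hb : ∀ᵐ ω ∂P, |Y ω| ≤ b) (hv : ∫ ω, Y ω ^ 2 ∂P ≤ v) (ht : 0 ≤ t) (htb : t * b < 3) :
    mgf Y P t ≤ exp (t * P[Y] + t ^ 2 * v / (2 * (1 - t * b / 3))) := by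
  set c := t ^ 2 / (2 * (1 - t * b / 3))
  have hc : 0 ≤ c := div_nonneg (sq_nonneg t) (by linarith)
  have hYint : Integrable Y P :=
    .of_bound hY.aestronglyMeasurable b (by simpa only [Real.norm_eq_abs] using hb)
  have hY2int : Integrable (fun ω => Y ω ^ 2) P := by
    refine .of_bound (hY.pow_const 2).aestronglyMeasurable (b ^ 2) ?_
    filter_upwards [hb] with ω hω
    simpa only [norm_pow, Real.norm_eq_abs] using pow_le_pow_left₀ (abs_nonneg _) hω 2
  have hexp_int : Integrable (fun ω => exp (t * Y ω)) P := by
    refine .of_bound (hY.const_mul t).exp.aestronglyMeasurable (exp (t * b)) ?_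
    filter_upwards [hb] with ω hω
    rw [Real.norm_eq_abs, abs_exp]
    exact exp_le_exp.mpr (mul_le_mul_of_nonneg_left ((le_abs_self _).trans hω) ht)
  have hpointwise : ∀ᵐ ω ∂P, exp (t * Y ω) ≤ 1 + t * Y ω + c * Y ω ^ 2 := by
    filter_upwards [hb] with ω hω
    have := exp_le_one_add_add_sq_div (x := t * Y ω) (a := t * b)
      (by rw [abs_mul, abs_of_nonneg ht]; exact mul_le_mul_of_nonneg_left hω ht) htb
    rwa [mul_pow, mul_div_right_comm] at this
  have hlin : Integrable (fun ω => 1 + t * Y ω) P := (integrable_const 1).add (hYint.const_mul t)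
  calc mgf Y P t ≤ ∫ ω, (1 + t * Y ω + c * Y ω ^ 2) ∂P :=
        integral_mono_ae hexp_int (hlin.add (hY2int.const_mul c)) hpointwise
    _ = 1 + t * P[Y] + c * ∫ ω, Y ω ^ 2 ∂P := by
        rw [integral_add hlin (hY2int.const_mul c),
          integral_add (integrable_const 1) (hYint.const_mul t), integral_const_mul,
          integral_const_mul]
        simp
    _ ≤ 1 + (t * P[Y] + t ^ 2 * v / (2 * (1 - t * b / 3))) := by
        rw [mul_div_right_comm]; linarith [mul_le_mul_of_nonneg_left hv hc]
    _ ≤ exp (t * P[Y] + t ^ 2 * v / (2 * (1 - t * b / 3))) := by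
        linarith [add_one_le_exp (t * P[Y] + t ^ 2 * v / (2 * (1 - t * b / 3)))]

theorem measureReal_sum_sub_integral_ge_le {ι : Type*} [Fintype ι] {Y : ι → Ω → ℝ}
    (hmeas : ∀ i, Measurable (Y i)) (hindep : iIndepFun Y P) {b v s : ℝ}
    (hb : ∀ i, ∀ᵐ ω ∂P, |Y i ω| ≤ b) (hv : ∀ i, ∫ ω, Y i ω ^ 2 ∂P ≤ v)
    (hb0 : 0 ≤ b) (hv0 : 0 < v) (hs : 0 ≤ s) :
    P.real {ω | Fintype.card ι * s ≤ ∑ i, (Y i ω - P[Y i])} ≤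
      exp (-(Fintype.card ι * s ^ 2) / (2 * (v + b * s / 3))) := by
  set n : ℝ := (Fintype.card ι : ℝ)
  set D := v + b * s / 3
  have hD : 0 < D := by positivity
  set t := s / D
  have ht : 0 ≤ t := by positivity
  have htD : t * D = s := div_mul_cancel₀ s hD.ne'
  have htb : t * b < 3 := by
    rw [div_mul_eq_mul_div, div_lt_iff₀ hD]; simp only [D]; linarith
  have hquad : t ^ 2 * v / (2 * (1 - t * b / 3)) = t * s / 2 := by
    rw [div_eq_iff (by linarith)]; simp only [D] at htD; linear_combination t * htD
  have hexp_int (i : ι) : Integrable (fun ω => exp (t * Y i ω)) P := by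
    refine .of_bound ((hmeas i).const_mul t).exp.aestronglyMeasurable (exp (t * b)) ?_
    filter_upwards [hb i] with ω hω
    rw [Real.norm_eq_abs, abs_exp]
    exact exp_le_exp.mpr (mul_le_mul_of_nonneg_left ((le_abs_self _).trans hω) ht)
  have hset : {ω | n * s ≤ ∑ i, (Y i ω - P[Y i])} = {ω | n * s + ∑ i, P[Y i] ≤ (∑ i, Y i) ω} := by
    ext ω; simp [Finset.sum_sub_distrib, le_sub_iff_add_le]
  have hmgf : mgf (∑ i, Y i) P t ≤ exp (t * ∑ i, P[Y i] + n * (t * s / 2)) := by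
    calc mgf (∑ i, Y i) P t = ∏ i, mgf (Y i) P t := hindep.mgf_sum hmeas _
      _ ≤ ∏ i, exp (t * P[Y i] + t * s / 2) := by
        gcongr with i
        · exact fun i _ => mgf_nonneg
        · exact hquad ▸ mgf_le_exp_of_abs_le (hmeas i) (hb i) (hv i) ht htb
      _ = exp (t * ∑ i, P[Y i] + n * (t * s / 2)) := by
        rw [← exp_sum, Finset.sum_add_distrib, Finset.mul_sum]; simp [n]
  calc P.real {ω | n * s ≤ ∑ i, (Y i ω - P[Y i])}
      ≤ exp (-t * (n * s + ∑ i, P[Y i])) * mgf (∑ i, Y i) P t := by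
        rw [hset]
        exact measure_ge_le_exp_mul_mgf _ ht
          (hindep.integrable_exp_mul_sum hmeas fun i _ => hexp_int i)
    _ ≤ exp (-t * (n * s + ∑ i, P[Y i])) * exp (t * ∑ i, P[Y i] + n * (t * s / 2)) := by
        gcongr
    _ = exp (-(n * s ^ 2) / (2 * D)) := by
        rw [← exp_add]; congr 1; rw [eq_div_iff (by positivity)]; linear_combination (-n * s) * htD

theorem measureReal_abs_sum_sub_integral_ge_le {ι : Type*} [Fintype ι] {Y : ι → Ω → ℝ}
    (hmeas : ∀ i, Measurable (Y i)) (hindep : iIndepFun Y P) {b v s : ℝ}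
    (hb : ∀ i, ∀ᵐ ω ∂P, |Y i ω| ≤ b) (hv : ∀ i, ∫ ω, Y i ω ^ 2 ∂P ≤ v)
    (hb0 : 0 ≤ b) (hv0 : 0 < v) (hs : 0 ≤ s) :
    P.real {ω | Fintype.card ι * s ≤ |∑ i, (Y i ω - P[Y i])|} ≤
      2 * exp (-(Fintype.card ι * s ^ 2) / (2 * (v + b * s / 3))) := by
  have hupper := measureReal_sum_sub_integral_ge_le hmeas hindep hb hv hb0 hv0 hs
  have hlower := measureReal_sum_sub_integral_ge_le (Y := fun i ω => -Y i ω)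
    (fun i => (hmeas i).neg) (hindep.comp (fun _ x => -x) fun _ => measurable_neg)
    (fun i => by simpa only [abs_neg] using hb i) (by simpa only [neg_sq] using hv) hb0 hv0 hs
  have hsplit : {ω | Fintype.card ι * s ≤ |∑ i, (Y i ω - P[Y i])|} ⊆
      {ω | Fintype.card ι * s ≤ ∑ i, (Y i ω - P[Y i])} ∪
        {ω | Fintype.card ι * s ≤ ∑ i, (-Y i ω - ∫ ω', -Y i ω' ∂P)} := by
    intro ω hω
    simp only [integral_neg, Set.mem_union, Set.mem_ofPred_eq] at hω ⊢
    rcases le_abs'.mp hω with h | h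
    · refine Or.inr ((le_neg.mpr h).trans_eq ?_)
      rw [← Finset.sum_neg_distrib]
      exact Finset.sum_congr rfl fun i _ => by ring
    · exact Or.inl h
  calc _ ≤ _ := measureReal_mono hsplit
    _ ≤ _ := measureReal_union_le _ _
    _ ≤ _ := by linarith

theorem measureReal_abs_sampleMean_sub_gt_le {ι : Type*} [Fintype ι] [Nonempty ι]
    {Y : ι → Ω → ℝ} (hmeas : ∀ i, Measurable (Y i)) (hindep : iIndepFun Y P) {b v s m : ℝ}
    (hb : ∀ i, ∀ᵐ ω ∂P, |Y i ω| ≤ b) (hv : ∀ i, ∫ ω, Y i ω ^ 2 ∂P ≤ v)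
    (hb0 : 0 ≤ b) (hv0 : 0 < v) (hs : 0 ≤ s) (hmean : ∀ i, P[Y i] = m) :
    P.real {ω | s < |1 / (Fintype.card ι : ℝ) * ∑ i, Y i ω - m|} ≤
      2 * exp (-(Fintype.card ι * s ^ 2) / (2 * (v + b * s / 3))) := by
  have hn : (0 : ℝ) < Fintype.card ι := by exact_mod_cast Fintype.card_pos
  refine le_trans (measureReal_mono fun ω hω => ?_)
    (measureReal_abs_sum_sub_integral_ge_le hmeas hindep hb hv hb0 hv0 hs)
  have hcentered : ∑ i, (Y i ω - P[Y i]) =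
      Fintype.card ι * (1 / (Fintype.card ι : ℝ) * ∑ i, Y i ω - m) := by
    simp only [Finset.sum_sub_distrib, hmean, Finset.sum_const, Finset.card_univ, nsmul_eq_mul]
    field_simp
  rw [Set.mem_ofPred_eq, hcentered, abs_mul, abs_of_pos hn]
  exact mul_le_mul_of_nonneg_left hω.le hn.le

theorem ofReal_one_sub_sum_le_measure_forall {ι : Type*} [Fintype ι] {p : ι → Ω → Prop}
    {r : ι → ℝ} (h : ∀ j, P.real {ω | ¬ p j ω} ≤ r j) :
    ENNReal.ofReal (1 - ∑ j, r j) ≤ P {ω | ∀ j, p j ω} := by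
  have hcompl : {ω | ∀ j, p j ω}ᶜ = ⋃ j, {ω | ¬ p j ω} := by ext; simp
  have hcover : 1 ≤ P.real {ω | ∀ j, p j ω} + P.real {ω | ∀ j, p j ω}ᶜ := by
    calc (1 : ℝ) = P.real ({ω | ∀ j, p j ω} ∪ {ω | ∀ j, p j ω}ᶜ) := by simp
      _ ≤ _ := measureReal_union_le _ _
  rw [← ofReal_measureReal]
  refine ENNReal.ofReal_le_ofReal ?_
  calc 1 - ∑ j, r j ≤ 1 - ∑ j, P.real {ω | ¬ p j ω} := by gcongr with j; exact h j
    _ ≤ 1 - P.real {ω | ∀ j, p j ω}ᶜ := by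
        rw [hcompl]; gcongr; exact measureReal_iUnion_fintype_le _
    _ ≤ _ := by linarith

end ProbabilityTheory

/-- Bernstein-type guarantee for simultaneous sample-mean estimation: if for each
`j ∈ {1,…,L}` the random variables `X j 1, …, X j M` are i.i.d., bounded by `B j` and with
second moment at most `B j`, and `M ≥ (1 + ε/3) · (2 log(2L/δ)/ε²) · max_j B j`, then with
probability at least `1 - δ` all `L` sample means are within `ε` of their expectations. -/
theorem sample_mean_simultaneous_estimation
    {Ω : Type*} [MeasurableSpace Ω] (P : Measure Ω) [IsProbabilityMeasure P]
    (L M : ℕ) (hL : 1 ≤ L) (hM : 1 ≤ M)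
    (ε δ : ℝ) (hε : ε ∈ Set.Ioo (0:ℝ) 1) (hδ : δ ∈ Set.Ioo (0:ℝ) 1)
    (B : Fin L → ℝ) (hB : ∀ j, 0 < B j)
    (X : Fin L → Fin M → Ω → ℝ)
    (hmeas : ∀ j i, Measurable (X j i))
    (hindep : ∀ j, iIndepFun (X j) P)
    (hident : ∀ j i i', IdentDistrib (X j i) (X j i') P P)
    (hbound : ∀ j i, ∀ᵐ ω ∂P, |X j i ω| ≤ B j)
    (hmom : ∀ j i, ∫ ω, (X j i ω) ^ 2 ∂P ≤ B j)
    (hMbig : (1 + ε/3) * (2 * Real.log (2 * (L:ℝ) / δ) / ε ^ 2) *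
        (Finset.univ.sup' (Finset.univ_nonempty_iff.mpr ⟨⟨0, hL⟩⟩) B) ≤ (M:ℝ)) :
    ENNReal.ofReal (1 - δ) ≤
      P {ω | ∀ j, |(1 / (M:ℝ)) * ∑ i, X j i ω - ∫ ω', X j ⟨0, hM⟩ ω' ∂P| ≤ ε} := by
  obtain ⟨hε0, -⟩ := hε
  obtain ⟨hδ0, hδ1⟩ := hδ
  have hL1 : (1 : ℝ) ≤ L := by exact_mod_cast hL
  have hL0 : (0 : ℝ) < L := one_pos.trans_le hL1
  have : Nonempty (Fin M) := ⟨⟨0, hM⟩⟩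
  have hlog : 0 < log (2 * L / δ) := log_pos (by rw [one_lt_div hδ0]; linarith)
  have hbad (j : Fin L) :
      P.real {ω | ¬ |(1 / (M:ℝ)) * ∑ i, X j i ω - ∫ ω', X j ⟨0, hM⟩ ω' ∂P| ≤ ε} ≤ δ / L := by
    have hMj : (1 + ε / 3) * (2 * log (2 * L / δ) / ε ^ 2) * B j ≤ M :=
      le_trans (by gcongr; exact Finset.le_sup' B (Finset.mem_univ j)) hMbig
    have hdev := measureReal_abs_sampleMean_sub_gt_le (hmeas j) (hindep j) (hbound j) (hmom j)
      (hB j).le (hB j) hε0.le fun i => (hident j i ⟨0, hM⟩).integral_eq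
    simp only [not_le, Fintype.card_fin] at hdev ⊢
    exact hdev.trans (two_mul_exp_neg_le_div_of_le (hB j) hε0 hδ0 hL0 hMj)
  calc ENNReal.ofReal (1 - δ) = ENNReal.ofReal (1 - ∑ _j : Fin L, δ / L) := by
        simp [mul_div_cancel₀ δ hL0.ne']
    _ ≤ _ := ofReal_one_sub_sum_le_measure_forall hbad
end

section
/- Let H be a finite group, V a finite-dimensional complex inner product space, and φ : H → U(V) a unitary representation that is irreducible (the only subspaces W ⊆ V with φ(g)W ⊆ W for all g ∈ H are {0} and V). Let v ∈ V be nonzero and let O_v = { φ(g)v : g ∈ H } be its orbit, a finite subset of V. Then for all x ∈ V: Σ_{w ∈ O_v} ⟨w, x⟩ · w = (|O_v| / dim V) · ‖v‖² · x. -/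
open Classical

/-!
The frame operator `T x = ∑_{w ∈ O_v} ⟨w, x⟩ w` commutes with every `φ g`, because `φ g` is
unitary and permutes the orbit. By Schur's lemma it is therefore a scalar `c`, and comparing
traces, `c · dim V = tr T = ∑_{w ∈ O_v} ‖w‖² = |O_v| ‖v‖²`.
-/

open scoped InnerProductSpace

section FrameOperator

variable {𝕜 V : Type*} [RCLike 𝕜] [NormedAddCommGroup V] [InnerProductSpace 𝕜 V]

variable (𝕜) in
def frameOperator (s : Finset V) : V →ₗ[𝕜] V :=
  ∑ w ∈ s, (innerₛₗ 𝕜 w).smulRight w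

theorem frameOperator_apply (s : Finset V) (x : V) :
    frameOperator 𝕜 s x = ∑ w ∈ s, ⟪w, x⟫_𝕜 • w := by
  simp [frameOperator, LinearMap.sum_apply]

theorem frameOperator_image_apply (U : V →ₗᵢ[𝕜] V) (s : Finset V) (x : V) :
    frameOperator 𝕜 (s.image U) (U x) = U (frameOperator 𝕜 s x) := by
  simp only [frameOperator_apply, Finset.sum_image fun _ _ _ _ h => U.injective h,
    LinearIsometry.inner_map_map, map_sum, map_smul]

theorem trace_frameOperator [FiniteDimensional 𝕜 V] (s : Finset V) :
    LinearMap.trace 𝕜 V (frameOperator 𝕜 s) = ∑ w ∈ s, (‖w‖ : 𝕜) ^ 2 := by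
  simp [frameOperator, map_sum, inner_self_eq_norm_sq_to_K]

end FrameOperator

/-- Schur's lemma: an eigenspace of `T` is a nonzero invariant subspace. -/
theorem Module.End.exists_eq_smul_one_of_commute_of_irreducible
    {K V ι : Type*} [Field K] [IsAlgClosed K] [AddCommGroup V] [Module K V]
    [FiniteDimensional K V] [Nontrivial V] (ρ : ι → Module.End K V)
    (hirr : ∀ W : Submodule K V, (∀ i, ∀ w ∈ W, ρ i w ∈ W) → W = ⊥ ∨ W = ⊤)
    (T : Module.End K V) (hT : ∀ i, Commute T (ρ i)) :
    ∃ c : K, T = c • 1 := by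
  obtain ⟨c, hc⟩ := Module.End.exists_eigenvalue T
  have hinv : ∀ i, ∀ w ∈ T.eigenspace c, ρ i w ∈ T.eigenspace c := by
    intro i w hw
    rw [Module.End.mem_eigenspace_iff] at hw ⊢
    rw [← Module.End.mul_apply, (hT i).eq, Module.End.mul_apply, hw, map_smul]
  have htop : T.eigenspace c = ⊤ := (hirr _ hinv).resolve_left hc
  exact ⟨c, LinearMap.ext fun y =>
    Module.End.mem_eigenspace_iff.mp (htop ▸ Submodule.mem_top)⟩

theorem MonoidHom.image_orbit {G R V : Type*} [Group G] [Fintype G] [Semiring R]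
    [AddCommMonoid V] [Module R V] (φ : G →* Module.End R V) (v : V) (g : G) :
    (Finset.univ.image fun h : G => φ h v).image (φ g) = Finset.univ.image fun h : G => φ h v := by
  ext w
  simp only [Finset.image_image, Finset.mem_image, Finset.mem_univ, true_and, Function.comp_apply,
    ← Module.End.mul_apply, ← map_mul]
  exact ⟨fun ⟨h, hw⟩ => ⟨g * h, hw⟩, fun ⟨h, hw⟩ => ⟨g⁻¹ * h, by rwa [mul_inv_cancel_left]⟩⟩

/-- Frame operator of the orbit of a nonzero vector under an irreducible unitary
representation `φ` of a finite group `H` on a finite-dimensional complex inner product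
space `V`: for every `x ∈ V`,
`∑_{w ∈ O_v} ⟨w, x⟩ • w = (|O_v| / dim V) ‖v‖² • x`,
where `O_v = {φ(g) v : g ∈ H}` is the orbit (as a set of distinct vectors). -/
theorem frame_operator_of_irreducible_orbit
    {H V : Type*} [Group H] [Fintype H]
    [NormedAddCommGroup V] [InnerProductSpace ℂ V] [FiniteDimensional ℂ V]
    (φ : H →* (V →ₗ[ℂ] V))
    (hunit : ∀ (g : H) (x y : V), (inner ℂ (φ g x) (φ g y) : ℂ) = inner ℂ x y)
    (hirr : ∀ W : Submodule ℂ V, (∀ g : H, ∀ w ∈ W, φ g w ∈ W) → W = ⊥ ∨ W = ⊤)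
    (v : V) (hv : v ≠ 0) (x : V) :
    ∑ w ∈ Finset.univ.image (fun g : H => φ g v), (inner ℂ w x : ℂ) • w =
      ((((Finset.univ.image (fun g : H => φ g v)).card : ℂ) / (Module.finrank ℂ V : ℂ)) *
        ((‖v‖ : ℂ)) ^ 2) • x := by
  set O := Finset.univ.image fun g : H => φ g v
  have hcomm : ∀ g, Commute (frameOperator ℂ O) (φ g) := fun g => LinearMap.ext fun y => by
    have := frameOperator_image_apply ((φ g).isometryOfInner (hunit g)) O y
    rwa [LinearMap.coe_isometryOfInner, MonoidHom.image_orbit] at this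
  have : Nontrivial V := nontrivial_of_ne v 0 hv
  obtain ⟨c, hc⟩ := Module.End.exists_eq_smul_one_of_commute_of_irreducible φ hirr _ hcomm
  have hnorm : ∀ w ∈ O, ‖w‖ = ‖v‖ :=
    Finset.forall_mem_image.2 fun g _ => ((φ g).isometryOfInner (hunit g)).norm_map v
  have htrace : c * Module.finrank ℂ V = O.card * (‖v‖ : ℂ) ^ 2 :=
    calc c * Module.finrank ℂ V = LinearMap.trace ℂ V (c • 1) := by simp
      _ = ∑ w ∈ O, (‖w‖ : ℂ) ^ 2 := by simp [← hc, trace_frameOperator]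
      _ = ∑ w ∈ O, (‖v‖ : ℂ) ^ 2 := Finset.sum_congr rfl fun w hw => by rw [hnorm w hw]
      _ = O.card * (‖v‖ : ℂ) ^ 2 := by simp
  have hn : (Module.finrank ℂ V : ℂ) ≠ 0 := Nat.cast_ne_zero.mpr Module.finrank_pos.ne'
  rw [← frameOperator_apply, hc, div_mul_eq_mul_div, ← htrace, mul_div_cancel_right₀ _ hn,
    LinearMap.smul_apply, Module.End.one_apply]
end

section
/- Let k ≥ 1 and n ≥ 2k be integers, and let ℓ be an integer with 2k ≤ ℓ ≤ n. Then the number of 2k-element subsets T of {0,…,n−1} with loc(T) = ℓ equals binom(ℓ−k−1, k−1) · binom(n+k−ℓ, k). -/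
open Classical

/-- The Jordan–Wigner qubit locality of a `2k`-element subset of `{0,…,n-1}`, given by its
increasing enumeration `t : Fin (2k) → Fin n`: `loc(T) = ∑_{i=1}^{k} (t_{2i} - t_{2i-1} + 1)`
(pairs of consecutive entries, `0`-indexed as `(t(2i), t(2i+1))`). -/
def loc {n k : ℕ} (t : Fin (2*k) → Fin n) : ℕ :=
  ∑ i : Fin k,
    ((t ⟨2*(i:ℕ)+1, by have := i.isLt; omega⟩).val
      - (t ⟨2*(i:ℕ), by have := i.isLt; omega⟩).val + 1)

/-!
Encode `t₀ < ⋯ < t_{2k-1}` in `{0, …, n-1}` by its `2k + 1` gaps `tⱼ - tⱼ₋₁ - 1`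
(with `t₋₁ = -1`, `t_{2k} = n`): these are arbitrary naturals summing to `n - 2k`. Since
`loc t` is `2k` plus the sum of the `k` gaps inside the pairs `(t_{2i}, t_{2i+1})`, the condition
`loc t = ℓ` says that the `k` inner gaps sum to `ℓ - 2k` and the `k + 1` outer gaps to `n - ℓ`,
and stars and bars counts both families.
-/

open Finset Function

instance {α : Type*} [Fintype α] (N : ℕ) : Finite {g : α → ℕ // ∑ i, g i = N} :=
  .of_equiv _ (Sym.equivNatSumOfFintype α N)

theorem Nat.card_sum_eq_choose {α : Type*} [Fintype α] (N : ℕ) :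
    Nat.card {g : α → ℕ // ∑ i, g i = N} = (Fintype.card α + N - 1).choose N := by
  rw [← Nat.card_congr (Sym.equivNatSumOfFintype α N), Nat.card_eq_fintype_card,
    Sym.card_sym_eq_choose]

def strictMonoEquivOrderEmbedding (α β : Type*) [LinearOrder α] [Preorder β] :
    {f : α → β // StrictMono f} ≃ (α ↪o β) where
  toFun f := OrderEmbedding.ofStrictMono f.1 f.2
  invFun e := ⟨e, e.strictMono⟩

theorem Nat.card_strictMono_fin_eq_choose (m : ℕ) (β : Type*) [LinearOrder β] :
    Nat.card {f : Fin m → β // StrictMono f} = (Nat.card β).choose m := by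
  rw [Nat.card_congr ((strictMonoEquivOrderEmbedding _ _).trans
    Set.powersetCard.ofFinEmbEquiv), Set.powersetCard.card]

section Gaps

variable {m n : ℕ}

/-- `f` shifted up by one and padded with the sentinels `-1 ↦ 0` and `n ↦ n + 1`, so that
`gapSeq f i` is the number of points of `{-1, …, n}` strictly between consecutive entries. -/
def paddedSeq (f : Fin m → Fin n) (j : ℕ) : ℕ :=
  if j = 0 then 0 else if h : j - 1 < m then f ⟨j - 1, h⟩ + 1 else n + 1

def gapSeq (f : Fin m → Fin n) (i : ℕ) : ℕ := paddedSeq f (i + 1) - paddedSeq f i - 1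

theorem paddedSeq_succ_of_lt (f : Fin m → Fin n) {j : ℕ} (hj : j < m) :
    paddedSeq f (j + 1) = f ⟨j, hj⟩ + 1 := by
  simp [paddedSeq, hj]

theorem paddedSeq_succ_self (f : Fin m → Fin n) : paddedSeq f (m + 1) = n + 1 := by
  simp [paddedSeq]

theorem paddedSeq_lt_succ {f : Fin m → Fin n} (hf : StrictMono f) {j : ℕ} (hj : j ≤ m) :
    paddedSeq f j < paddedSeq f (j + 1) := by
  rcases Nat.lt_or_eq_of_le hj with hj | rfl
  · rw [paddedSeq_succ_of_lt f hj]
    rcases j with _ | j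
    · simp [paddedSeq]
    · rw [paddedSeq_succ_of_lt f (by omega)]
      exact Nat.succ_lt_succ (hf (Fin.mk_lt_mk.2 (Nat.lt_succ_self j)))
  · rw [paddedSeq_succ_self]
    rcases j with _ | j
    · simp [paddedSeq]
    · rw [paddedSeq_succ_of_lt f (by omega)]
      exact Nat.succ_lt_succ (Fin.is_lt _)

theorem paddedSeq_eq_sum {f : Fin m → Fin n} (hf : StrictMono f) {j : ℕ} (hj : j ≤ m + 1) :
    paddedSeq f j = ∑ i ∈ range j, (gapSeq f i + 1) := by
  induction j with
  | zero => simp [paddedSeq]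
  | succ j ih =>
    have := paddedSeq_lt_succ hf (j := j) (by omega)
    rw [sum_range_succ, ← ih (by omega), gapSeq]
    omega

theorem sum_gapSeq {f : Fin m → Fin n} (hf : StrictMono f) :
    ∑ i ∈ range (m + 1), gapSeq f i = n - m := by
  have h := paddedSeq_eq_sum hf le_rfl
  rw [paddedSeq_succ_self, sum_add_distrib, sum_const, card_range, smul_eq_mul, mul_one] at h
  omega

def gapMap (f : {f : Fin m → Fin n // StrictMono f}) :
    {g : Fin (m + 1) → ℕ // ∑ i, g i = n - m} :=
  ⟨fun i => gapSeq f.1 i, by rw [Fin.sum_univ_eq_sum_range (gapSeq f.1)]; exact sum_gapSeq f.2⟩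

theorem gapMap_injective : Injective (gapMap (m := m) (n := n)) := by
  rintro ⟨f, hf⟩ ⟨f', hf'⟩ h
  have hgap : ∀ i < m + 1, gapSeq f i = gapSeq f' i := fun i hi =>
    congrFun (congrArg Subtype.val h) ⟨i, hi⟩
  ext ⟨j, hj⟩
  show (f ⟨j, hj⟩ : ℕ) = f' ⟨j, hj⟩
  have h₁ := paddedSeq_eq_sum hf (j := j + 1) (by omega)
  have h₂ := paddedSeq_eq_sum hf' (j := j + 1) (by omega)
  rw [paddedSeq_succ_of_lt f hj, sum_congr rfl fun i hi => by
    rw [hgap i (by simp at hi; omega)]] at h₁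
  rw [paddedSeq_succ_of_lt f' hj] at h₂
  omega

theorem gapMap_bijective (h : m ≤ n) : Bijective (gapMap (m := m) (n := n)) :=
  gapMap_injective.bijective_of_nat_card_le <| by
    rw [Nat.card_sum_eq_choose, Nat.card_strictMono_fin_eq_choose, Nat.card_eq_fintype_card,
      Fintype.card_fin, Fintype.card_fin, ← Nat.choose_symm h]
    exact le_of_eq <| by congr 1; omega

noncomputable def gapEquiv (h : m ≤ n) :
    {f : Fin m → Fin n // StrictMono f} ≃ {g : Fin (m + 1) → ℕ // ∑ i, g i = n - m} :=
  .ofBijective _ (gapMap_bijective h)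

end Gaps

section OddEven

variable {k : ℕ}

def finSumFinOddEven (k : ℕ) : Fin k ⊕ Fin (k + 1) ≃ Fin (2 * k + 1) where
  toFun := Sum.elim (fun i => ⟨2 * i + 1, by omega⟩) (fun i => ⟨2 * i, by omega⟩)
  invFun j := if h : j.val % 2 = 1 then .inl ⟨j / 2, by omega⟩ else .inr ⟨j / 2, by omega⟩
  left_inv := by
    rintro (i | i) <;> simp [Fin.ext_iff]
    omega
  right_inv j := by
    by_cases h : j.val % 2 = 1 <;> simp [h] <;> ext <;> simp <;> omega

theorem Fin.sum_univ_eq_sum_odd_add_sum_even {M : Type*} [AddCommMonoid M]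
    (g : Fin (2 * k + 1) → M) :
    ∑ j, g j = ∑ i : Fin k, g ⟨2 * i + 1, by omega⟩ + ∑ i : Fin (k + 1), g ⟨2 * i, by omega⟩ := by
  rw [← (finSumFinOddEven k).sum_comp, Fintype.sum_sum_type]
  rfl

def oddEvenEquiv (α : Type*) (k : ℕ) :
    (Fin (2 * k + 1) → α) ≃ (Fin k → α) × (Fin (k + 1) → α) :=
  ((finSumFinOddEven k).arrowCongr (.refl α)).symm.trans (Equiv.sumArrowEquivProdArrow _ _ _)

@[simp]
theorem oddEvenEquiv_apply_fst {α : Type*} (g : Fin (2 * k + 1) → α) (i : Fin k) :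
    (oddEvenEquiv α k g).1 i = g ⟨2 * i + 1, by omega⟩ :=
  rfl

@[simp]
theorem oddEvenEquiv_apply_snd {α : Type*} (g : Fin (2 * k + 1) → α) (i : Fin (k + 1)) :
    (oddEvenEquiv α k g).2 i = g ⟨2 * i, by omega⟩ :=
  rfl

end OddEven

theorem loc_eq_sum_gapSeq {k n : ℕ} {t : Fin (2 * k) → Fin n} (ht : StrictMono t) :
    loc t = ∑ i : Fin k, gapSeq t (2 * i + 1) + 2 * k := by
  have hpair (i : Fin k) : (t ⟨2 * i + 1, by omega⟩ : ℕ) - t ⟨2 * i, by omega⟩ + 1 =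
      gapSeq t (2 * i + 1) + 2 := by
    have h₀ := paddedSeq_succ_of_lt t (j := 2 * i) (by omega)
    have h₁ := paddedSeq_succ_of_lt t (j := 2 * i + 1) (by omega)
    have hlt : t ⟨2 * i, by omega⟩ < t ⟨2 * i + 1, by omega⟩ := ht (Fin.mk_lt_mk.2 (by omega))
    rw [gapSeq, h₁, h₀]
    omega
  calc loc t = ∑ i : Fin k, (gapSeq t (2 * i + 1) + 2) := sum_congr rfl fun i _ => hpair i
    _ = _ := by
      rw [sum_add_distrib, sum_const, card_univ, Fintype.card_fin, smul_eq_mul, Nat.mul_comm k]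

noncomputable def locFiberEquiv {k n ℓ : ℕ} (hℓ₁ : 2 * k ≤ ℓ) (hℓ₂ : ℓ ≤ n) :
    {t : {f : Fin (2 * k) → Fin n // StrictMono f} // loc t.1 = ℓ} ≃
      {d : Fin k → ℕ // ∑ i, d i = ℓ - 2 * k} × {s : Fin (k + 1) → ℕ // ∑ i, s i = n - ℓ} :=
  calc {t : {f : Fin (2 * k) → Fin n // StrictMono f} // loc t.1 = ℓ}
    _ ≃ {g : {g : Fin (2 * k + 1) → ℕ // ∑ j, g j = n - 2 * k} //
          ∑ i : Fin k, g.1 ⟨2 * i + 1, by omega⟩ + 2 * k = ℓ} :=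
      (gapEquiv (by omega)).subtypeEquiv fun t => by
        rw [loc_eq_sum_gapSeq t.2]
        rfl
    _ ≃ {g : Fin (2 * k + 1) → ℕ // ∑ j, g j = n - 2 * k ∧
          ∑ i : Fin k, g ⟨2 * i + 1, by omega⟩ + 2 * k = ℓ} :=
      Equiv.subtypeSubtypeEquivSubtypeInter (fun g : Fin (2 * k + 1) → ℕ => ∑ j, g j = n - 2 * k)
        (fun g => ∑ i : Fin k, g ⟨2 * i + 1, by omega⟩ + 2 * k = ℓ)
    _ ≃ {p : (Fin k → ℕ) × (Fin (k + 1) → ℕ) //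
          ∑ i, p.1 i = ℓ - 2 * k ∧ ∑ i, p.2 i = n - ℓ} :=
      (oddEvenEquiv ℕ k).subtypeEquiv fun g => by
        simp only [Fin.sum_univ_eq_sum_odd_add_sum_even, oddEvenEquiv_apply_fst,
          oddEvenEquiv_apply_snd]
        omega
    _ ≃ _ := Equiv.subtypeProdEquivProd (p := fun d : Fin k → ℕ => ∑ i, d i = ℓ - 2 * k)
      (q := fun s : Fin (k + 1) → ℕ => ∑ i, s i = n - ℓ)

theorem count_subsets_with_locality_general
    (k n ℓ : ℕ) (hk : 1 ≤ k) (hℓ1 : 2*k ≤ ℓ) (hℓ2 : ℓ ≤ n) :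
    (Finset.univ.filter
        (fun t : {f : Fin (2*k) → Fin n // StrictMono f} => loc t.1 = ℓ)).card =
      (ℓ - k - 1).choose (k - 1) * (n + k - ℓ).choose k := by
  rw [← Fintype.card_subtype, ← Nat.card_eq_fintype_card, Nat.card_congr (locFiberEquiv hℓ1 hℓ2),
    Nat.card_prod, Nat.card_sum_eq_choose, Nat.card_sum_eq_choose, Fintype.card_fin,
    Fintype.card_fin, show ℓ - k - 1 = ℓ - 2 * k + (k - 1) by omega,
    show n + k - ℓ = n - ℓ + k by omega, ← Nat.choose_symm_add, ← Nat.choose_symm_add]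
  congr 2 <;> omega

/-- For `k ≥ 1`, `n ≥ 2k`, and `2k ≤ ℓ ≤ n`, the number of `2k`-element subsets `T` of
`{0,…,n-1}` (identified with strictly increasing tuples `t : Fin (2k) → Fin n`) with
`loc(T) = ℓ` equals `C(ℓ-k-1, k-1) · C(n+k-ℓ, k)`. -/
theorem count_subsets_with_locality
    (k n ℓ : ℕ) (hk : 1 ≤ k) (hn : 2*k ≤ n) (hℓ1 : 2*k ≤ ℓ) (hℓ2 : ℓ ≤ n) :
    (Finset.univ.filter
        (fun t : {f : Fin (2*k) → Fin n // StrictMono f} => loc t.1 = ℓ)).card =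
      (ℓ - k - 1).choose (k - 1) * (n + k - ℓ).choose k :=
  count_subsets_with_locality_general k n ℓ hk hℓ1 hℓ2
end

section
/- Let k ≥ 1 and n ≥ 2k be integers. Then 9^{−k} · binom(n−k, k) ≤ Σ_T 3^{−loc(T)} ≤ 6^{−k} · binom(n−k, k), where the sum runs over all 2k-element subsets T of {0,…,n−1}. (Dividing by binom(n,2k), this says the average of 3^{−loc(T)} over a uniformly random 2k-subset T lies between 9^{−k}·binom(n−k,k)/binom(n,2k) and (3/2)^k·9^{−k}·binom(n−k,k)/binom(n,2k), which yields the O(n^k) bound on the squared shadow norm of the number-conserving ensemble.) -/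
open Classical

/-!
Write `ℓ_i = t(2i+1) - t(2i) + 1 ≥ 2` for the length of the `i`-th stretch, so that
`3^{-loc(T)} = ∏_i 3^{-ℓ_i}`. The shifted left ends `w_i = t(2i) - i` form a strictly increasing
`k`-tuple in `{0,…,n-k-1}`, and `T` is recovered from `(ℓ, w)`. Hence the sum is at most
`C(n-k, k) (∑_{ℓ ≥ 2} 3^{-ℓ})^k = C(n-k, k) 6^{-k}`. Conversely every such `w` arises from the
`T` whose stretches are the adjacent pairs `{w_i + i, w_i + i + 1}`, and such `T` contribute `9^{-k}`
each.
-/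

open Finset Function

lemma sum_comp_le_sum_of_injective {ι κ M : Type*} [Fintype ι] [AddCommMonoid M] [PartialOrder M]
    [IsOrderedAddMonoid M] {e : ι → κ} (he : Injective e) {s : Finset κ} (hs : ∀ i, e i ∈ s)
    {g : κ → M} (hg : ∀ b ∈ s, 0 ≤ g b) : ∑ i, g (e i) ≤ ∑ b ∈ s, g b := by
  rw [← sum_image he.injOn]
  exact sum_le_sum_of_subset_of_nonneg (by simpa [subset_iff] using hs) fun b hb _ => hg b hb

lemma card_strictMono_fin (k m : ℕ) :
    Fintype.card {w : Fin k → Fin m // StrictMono w} = m.choose k := by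
  let e : {w : Fin k → Fin m // StrictMono w} ≃ (Fin k ↪o Fin m) :=
    { toFun := fun w => OrderEmbedding.ofStrictMono w.1 w.2
      invFun := fun f => ⟨f, f.strictMono⟩
      left_inv := fun _ => rfl
      right_inv := fun _ => rfl }
  rw [Fintype.card_eq_nat_card, Nat.card_congr (e.trans Set.powersetCard.ofFinEmbEquiv),
    Set.powersetCard.card, Nat.card_eq_fintype_card, Fintype.card_fin]

lemma sum_Ico_two_inv_three_pow_le (m : ℕ) : ∑ j ∈ Ico 2 m, (3⁻¹ : ℝ) ^ j ≤ 6⁻¹ :=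
  (geom_sum_Ico_le_of_lt_one (by norm_num) (by norm_num)).trans_eq (by norm_num)

namespace StrictMono

variable {m n : ℕ} {f : Fin m → Fin n}

lemma val_add_sub_le (hf : StrictMono f) {i j : Fin m} (hij : i ≤ j) :
    (f i : ℕ) + ((j : ℕ) - i) ≤ f j := by
  have hmaps : (Icc i j).map ⟨f, hf.injective⟩ ⊆ Icc (f i) (f j) := by
    intro b hb
    obtain ⟨a, ha, rfl⟩ := mem_map.1 hb
    rw [mem_Icc] at ha ⊢
    exact ⟨hf.monotone ha.1, hf.monotone ha.2⟩
  have := card_le_card hmaps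
  rw [card_map, Fin.card_Icc, Fin.card_Icc] at this
  have : (i : ℕ) ≤ j := hij
  omega

lemma le_val_apply (hf : StrictMono f) (j : Fin m) : (j : ℕ) ≤ f j := by
  have hj := j.isLt
  have := hf.val_add_sub_le (i := ⟨0, by omega⟩) (j := j) (Nat.zero_le _)
  simp only at this
  omega

lemma val_apply_add_lt (hf : StrictMono f) (i : Fin m) : (f i : ℕ) + (m - 1 - i) < n := by
  have hi := i.isLt
  have hle := hf.val_add_sub_le (i := i) (j := ⟨m - 1, by omega⟩) (Fin.mk_le_mk.2 (by omega))
  have := (f ⟨m - 1, by omega⟩).isLt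
  simp only at hle
  omega

end StrictMono

section Pairs

variable {k n : ℕ}

def pairFst (i : Fin k) : Fin (2 * k) := ⟨2 * i, by omega⟩

def pairSnd (i : Fin k) : Fin (2 * k) := ⟨2 * i + 1, by omega⟩

lemma exists_eq_pairFst_or_eq_pairSnd (j : Fin (2 * k)) : ∃ i, j = pairFst i ∨ j = pairSnd i :=
  ⟨⟨j / 2, by omega⟩, by simp only [pairFst, pairSnd, Fin.ext_iff]; omega⟩

def pairLength (t : Fin (2 * k) → Fin n) (i : Fin k) : ℕ :=
  (t (pairSnd i) : ℕ) - t (pairFst i) + 1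

lemma loc_eq_sum_pairLength (t : Fin (2 * k) → Fin n) : loc t = ∑ i, pairLength t i := rfl

lemma pairFst_lt_pairSnd (i : Fin k) : pairFst i < pairSnd i :=
  Fin.mk_lt_mk.2 (Nat.lt_succ_self _)

section AdjacentPairs

def adjacentPairs (w : Fin k → Fin (n - k)) (j : Fin (2 * k)) : Fin n :=
  ⟨w ⟨j / 2, by omega⟩ + (j + 1) / 2, by have := (w ⟨j / 2, by omega⟩).isLt; omega⟩

variable (w : Fin k → Fin (n - k))

lemma val_adjacentPairs_pairFst (i : Fin k) : (adjacentPairs w (pairFst i) : ℕ) = w i + i := by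
  have hi : (⟨2 * i / 2, by omega⟩ : Fin k) = i := Fin.ext (by simp)
  simp only [adjacentPairs, pairFst, hi]
  omega

lemma val_adjacentPairs_pairSnd (i : Fin k) :
    (adjacentPairs w (pairSnd i) : ℕ) = w i + i + 1 := by
  have hi : (⟨(2 * i + 1) / 2, by omega⟩ : Fin k) = i := Fin.ext (by simp only; omega)
  simp only [adjacentPairs, pairSnd, hi]
  omega

lemma pairLength_adjacentPairs (i : Fin k) : pairLength (adjacentPairs w) i = 2 := by
  rw [pairLength, val_adjacentPairs_pairFst, val_adjacentPairs_pairSnd]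
  omega

lemma loc_adjacentPairs : loc (adjacentPairs w) = 2 * k := by
  simp [loc_eq_sum_pairLength, pairLength_adjacentPairs, mul_comm]

lemma strictMono_adjacentPairs {w : Fin k → Fin (n - k)} (hw : StrictMono w) :
    StrictMono (adjacentPairs w) := by
  intro j j' hjj'
  have hj : (j : ℕ) < j' := hjj'
  have hj' : (j' : ℕ) < 2 * k := j'.isLt
  have hle : (w ⟨j / 2, by omega⟩ : ℕ) ≤ w ⟨j' / 2, by omega⟩ :=
    hw.monotone (Fin.mk_le_mk.2 (Nat.div_le_div_right hj.le))
  have hlt : (j : ℕ) / 2 < j' / 2 → (w ⟨j / 2, by omega⟩ : ℕ) < w ⟨j' / 2, by omega⟩ :=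
    fun h => hw (Fin.mk_lt_mk.2 h)
  rw [Fin.lt_def]
  simp only [adjacentPairs]
  omega

lemma adjacentPairs_injective : Injective (adjacentPairs : (Fin k → Fin (n - k)) → _) := by
  intro w w' h
  funext i
  have := congrArg (fun t => (t (pairFst i) : ℕ)) h
  simp only [val_adjacentPairs_pairFst] at this
  exact Fin.ext (by omega)

end AdjacentPairs

section Encoding

variable {t : Fin (2 * k) → Fin n}

def shiftedPairFst (t : Fin (2 * k) → Fin n) (i : Fin k) : ℕ := t (pairFst i) - i

lemma pairLength_le (t : Fin (2 * k) → Fin n) (i : Fin k) : pairLength t i ≤ n := by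
  have := (t (pairSnd i)).isLt
  unfold pairLength
  omega

namespace StrictMono

variable (ht : StrictMono t)
include ht

lemma two_le_pairLength (i : Fin k) : 2 ≤ pairLength t i := by
  have := ht (pairFst_lt_pairSnd i)
  rw [Fin.lt_def] at this
  unfold pairLength
  omega

lemma val_pairSnd_add_one (i : Fin k) :
    (t (pairSnd i) : ℕ) + 1 = t (pairFst i) + pairLength t i := by
  have := ht.two_le_pairLength i
  unfold pairLength at *
  omega

lemma val_pairFst (i : Fin k) : (t (pairFst i) : ℕ) = shiftedPairFst t i + i := by
  have := ht.le_val_apply (pairFst i)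
  simp only [shiftedPairFst, pairFst] at *
  omega

lemma shiftedPairFst_lt (i : Fin k) : shiftedPairFst t i < n - k := by
  have hlt := ht.val_apply_add_lt (pairFst i)
  have hle := ht.le_val_apply (pairFst i)
  have hi := i.isLt
  simp only [pairFst] at hlt hle
  unfold shiftedPairFst pairFst
  omega

lemma strictMono_shiftedPairFst : StrictMono (shiftedPairFst t) := by
  intro i j hij
  have hij' : (i : ℕ) < j := hij
  have := ht.val_add_sub_le (i := pairFst i) (j := pairFst j) (Fin.mk_le_mk.2 (by omega))
  have := ht.le_val_apply (pairFst i)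
  simp only [shiftedPairFst, pairFst] at *
  omega

end StrictMono

def pairEncoding (t : {t : Fin (2 * k) → Fin n // StrictMono t}) :
    (Fin k → ℕ) × {w : Fin k → Fin (n - k) // StrictMono w} :=
  (pairLength t.1, ⟨fun i => ⟨shiftedPairFst t.1 i, t.2.shiftedPairFst_lt i⟩,
    fun _ _ h => t.2.strictMono_shiftedPairFst h⟩)

lemma pairEncoding_injective : Injective (pairEncoding (k := k) (n := n)) := by
  rintro ⟨t, ht⟩ ⟨t', ht'⟩ h
  simp only [pairEncoding, Prod.mk.injEq, funext_iff] at h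
  obtain ⟨hlength, hshifted⟩ := h
  have hfst (i : Fin k) : (t (pairFst i) : ℕ) = t' (pairFst i) := by
    rw [ht.val_pairFst, ht'.val_pairFst]
    exact congrArg (fun w => (w.1 i : ℕ) + i) hshifted
  have hsnd (i : Fin k) : (t (pairSnd i) : ℕ) = t' (pairSnd i) := by
    have := ht.val_pairSnd_add_one i
    have := ht'.val_pairSnd_add_one i
    rw [hfst, hlength] at *
    omega
  refine Subtype.ext (funext fun j => Fin.ext ?_)
  obtain ⟨i, rfl | rfl⟩ := exists_eq_pairFst_or_eq_pairSnd j
  exacts [hfst i, hsnd i]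

lemma pairEncoding_mem (t : {t : Fin (2 * k) → Fin n // StrictMono t}) :
    pairEncoding t ∈ Fintype.piFinset (fun _ => Ico 2 (n + 1)) ×ˢ univ := by
  simp only [mem_product, Fintype.mem_piFinset, mem_Ico, mem_univ, and_true]
  exact fun i => ⟨t.2.two_le_pairLength i, Nat.lt_succ_of_le (pairLength_le t.1 i)⟩

end Encoding

end Pairs

lemma inv_nine_pow_mul_choose_le_sum_inv_three_pow_loc (k n : ℕ) :
    ((9:ℝ) ^ k)⁻¹ * ((n - k).choose k : ℝ) ≤
      ∑ t : {f : Fin (2*k) → Fin n // StrictMono f}, ((3:ℝ) ^ (loc t.1))⁻¹ :=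
  calc ((9:ℝ) ^ k)⁻¹ * ((n - k).choose k : ℝ)
      = ∑ w : {w : Fin k → Fin (n - k) // StrictMono w}, ((3:ℝ) ^ loc (adjacentPairs w.1))⁻¹ := by
        simp only [loc_adjacentPairs, sum_const, card_univ, card_strictMono_fin, nsmul_eq_mul,
          pow_mul]
        norm_num [mul_comm]
    _ ≤ _ := sum_comp_le_sum_of_injective (g := fun t => ((3:ℝ) ^ loc t.1)⁻¹)
        (e := fun w => ⟨adjacentPairs w.1, strictMono_adjacentPairs w.2⟩)
        (fun _ _ h => Subtype.ext (adjacentPairs_injective (congrArg Subtype.val h)))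
        (fun _ => mem_univ _) (fun _ _ => by positivity)

lemma sum_inv_three_pow_loc_le_inv_six_pow_mul_choose (k n : ℕ) :
    ∑ t : {f : Fin (2*k) → Fin n // StrictMono f}, ((3:ℝ) ^ (loc t.1))⁻¹ ≤
      ((6:ℝ) ^ k)⁻¹ * ((n - k).choose k : ℝ) := by
  have hpow : ∑ ℓ ∈ Fintype.piFinset (fun _ : Fin k => Ico 2 (n + 1)), ∏ i, (3⁻¹ : ℝ) ^ ℓ i =
      (∑ j ∈ Ico 2 (n + 1), (3⁻¹ : ℝ) ^ j) ^ k := by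
    rw [sum_prod_piFinset, prod_const, card_univ, Fintype.card_fin]
  calc ∑ t : {f : Fin (2*k) → Fin n // StrictMono f}, ((3:ℝ) ^ (loc t.1))⁻¹
      = ∑ t, ∏ i, (3⁻¹ : ℝ) ^ (pairEncoding t).1 i := by
        refine sum_congr rfl fun t _ => ?_
        rw [loc_eq_sum_pairLength, ← inv_pow, prod_pow_eq_pow_sum]
        rfl
    _ ≤ ∑ p ∈ Fintype.piFinset (fun _ => Ico 2 (n + 1)) ×ˢ univ, ∏ i, (3⁻¹ : ℝ) ^ p.1 i :=
        sum_comp_le_sum_of_injective (g := fun p => ∏ i, (3⁻¹ : ℝ) ^ p.1 i)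
          pairEncoding_injective pairEncoding_mem (fun _ _ => by positivity)
    _ = (n - k).choose k * (∑ j ∈ Ico 2 (n + 1), (3⁻¹ : ℝ) ^ j) ^ k := by
        simp only [sum_product_right, hpow, sum_const, card_univ, card_strictMono_fin,
          nsmul_eq_mul]
    _ ≤ (n - k).choose k * 6⁻¹ ^ k := by
        gcongr
        exact sum_Ico_two_inv_three_pow_le _
    _ = ((6:ℝ) ^ k)⁻¹ * ((n - k).choose k : ℝ) := by rw [inv_pow, mul_comm]

theorem sum_three_pow_neg_loc_bounds_general
    (k n : ℕ) :
    ((9:ℝ) ^ k)⁻¹ * ((n - k).choose k : ℝ) ≤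
      (∑ t : {f : Fin (2*k) → Fin n // StrictMono f}, ((3:ℝ) ^ (loc t.1))⁻¹) ∧
    (∑ t : {f : Fin (2*k) → Fin n // StrictMono f}, ((3:ℝ) ^ (loc t.1))⁻¹) ≤
      ((6:ℝ) ^ k)⁻¹ * ((n - k).choose k : ℝ) :=
  ⟨inv_nine_pow_mul_choose_le_sum_inv_three_pow_loc k n,
    sum_inv_three_pow_loc_le_inv_six_pow_mul_choose k n⟩

/-- For `k ≥ 1` and `n ≥ 2k`, the sum of `3^{-loc(T)}` over all `2k`-element subsets `T`
of `{0,…,n-1}` (identified with strictly increasing tuples) satisfies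
`9^{-k} C(n-k, k) ≤ ∑_T 3^{-loc(T)} ≤ 6^{-k} C(n-k, k)`. -/
theorem sum_three_pow_neg_loc_bounds
    (k n : ℕ) (hk : 1 ≤ k) (hn : 2*k ≤ n) :
    ((9:ℝ) ^ k)⁻¹ * ((n - k).choose k : ℝ) ≤
      (∑ t : {f : Fin (2*k) → Fin n // StrictMono f}, ((3:ℝ) ^ (loc t.1))⁻¹) ∧
    (∑ t : {f : Fin (2*k) → Fin n // StrictMono f}, ((3:ℝ) ^ (loc t.1))⁻¹) ≤
      ((6:ℝ) ^ k)⁻¹ * ((n - k).choose k : ℝ) :=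
  sum_three_pow_neg_loc_bounds_general k n
end
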